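/- arXiv:1512.04737 — 7 statements merged into one kernel-verified Lean document; each statement's English description precedes it below -/
import Mathlib

section
/- Let f₁,…,fₙ : ℝ → ℝ be twice continuously differentiable functions that are nonvanishing and have nonvanishing first derivatives, and let f : ℝⁿ → ℝ be defined by f(x₁,…,xₙ) = f₁(x₁)·…·fₙ(xₙ). Then at every point x the determinant of the Hessian matrix of f satisfies det H(f)(x) = f(x)ⁿ · [ (f₁''/f₁) · ∏_{i=2}^{n} (fᵢ'/fᵢ)' + (f₁'/f₁)' · Σ_{i=2}^{n} ( ∏_{2 ≤ k ≤ n, k ≠ i} (f_k'/f_k)' ) · (fᵢ'/fᵢ)² ], where all single-variable derivatives are evaluated at the corresponding coordinate xᵢ. -/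
open Real Finset

/-- The partial derivative of `f : ℝⁿ → ℝ` in the `i`-th coordinate direction. -/
noncomputable def pderiv' {n : ℕ} (f : (Fin n → ℝ) → ℝ) (i : Fin n) (x : Fin n → ℝ) : ℝ :=
  deriv (fun t => f (Function.update x i t)) (x i)

/-- The Hessian matrix of second-order partial derivatives of `f : ℝⁿ → ℝ`. -/
noncomputable def hessian {n : ℕ} (f : (Fin n → ℝ) → ℝ) (x : Fin n → ℝ) :
    Matrix (Fin n) (Fin n) ℝ :=
  Matrix.of fun i j => pderiv' (pderiv' f j) i x

/-!
Each partial derivative of `∏ i, F i (x i)` is again such a product, with the factor of the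
differentiated variable replaced by its derivative. Hence `H(f) = f · (D + g gᵀ)` with
`gᵢ = Fᵢ'/Fᵢ` and `D = diag (Fᵢ'/Fᵢ)'`, since `Fᵢ''/Fᵢ = (Fᵢ'/Fᵢ)' + gᵢ²`. The determinant of a
diagonal-plus-rank-one matrix is `∏ Dᵢ + ∑ gᵢ² ∏_{k ≠ i} D_k`: for invertible `D` this is the
matrix determinant lemma, and both sides are continuous in `D`, so it extends to all `D` by
density. Splitting off the index `0` gives the stated form.
-/

open Matrix Function

theorem prod_update_apply_eq_mul_prod_erase {ι α M : Type*} [Fintype ι] [DecidableEq ι]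
    [CommMonoid M] (F : ι → α → M) (i : ι) (G : α → M) (x : ι → α) :
    ∏ k, update F i G k (x k) = G (x i) * ∏ k ∈ univ.erase i, F k (x k) := by
  rw [← mul_prod_erase univ _ (mem_univ i), update_self]
  congr 1
  exact prod_congr rfl fun k hk => by rw [update_of_ne (ne_of_mem_erase hk)]

theorem prod_update_apply_eq_div_mul_prod {ι α K : Type*} [Fintype ι] [DecidableEq ι]
    [Field K] (F : ι → α → K) (i : ι) (G : α → K) (x : ι → α) (hF : F i (x i) ≠ 0) :
    ∏ k, update F i G k (x k) = G (x i) / F i (x i) * ∏ k, F k (x k) := by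
  rw [prod_update_apply_eq_mul_prod_erase, ← mul_prod_erase univ _ (mem_univ i)]
  field_simp

theorem pderiv'_prod_apply {n : ℕ} (F : Fin n → ℝ → ℝ) (j : Fin n) (x : Fin n → ℝ) :
    pderiv' (fun y => ∏ i, F i (y i)) j x = ∏ i, update F j (deriv (F j)) i (x i) := by
  have hslice : (fun t => ∏ i, F i (update x j t i))
      = fun t => F j t * ∏ k ∈ univ.erase j, F k (x k) := by
    funext t
    rw [← mul_prod_erase univ _ (mem_univ j), update_self]
    congr 1
    exact prod_congr rfl fun k hk => by rw [update_of_ne (ne_of_mem_erase hk)]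
  rw [pderiv', hslice, deriv_mul_const_field, prod_update_apply_eq_mul_prod_erase]

theorem hessian_prod {n : ℕ} (F : Fin n → ℝ → ℝ) (x : Fin n → ℝ) (hF : ∀ i, F i (x i) ≠ 0) :
    hessian (fun y => ∏ i, F i (y i)) x = (∏ i, F i (x i)) • Matrix.of fun i j =>
      if i = j then deriv (deriv (F i)) (x i) / F i (x i)
      else deriv (F i) (x i) / F i (x i) * (deriv (F j) (x j) / F j (x j)) := by
  ext i j
  have hpderiv : pderiv' (fun y => ∏ i, F i (y i)) j =
      fun y => ∏ i, update F j (deriv (F j)) i (y i) :=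
    funext (pderiv'_prod_apply F j)
  rw [hessian, of_apply, hpderiv, pderiv'_prod_apply, Matrix.smul_apply, of_apply, smul_eq_mul]
  split_ifs with hij
  · subst hij
    rw [update_self, update_idem, prod_update_apply_eq_div_mul_prod F i _ x (hF i), mul_comm]
  · have hFi : update F j (deriv (F j)) i (x i) ≠ 0 := by
      rw [update_of_ne hij]
      exact hF i
    rw [update_of_ne hij, prod_update_apply_eq_div_mul_prod _ i _ x hFi, update_of_ne hij,
      prod_update_apply_eq_div_mul_prod F j _ x (hF j)]
    ring

theorem det_diagonal_add_vecMulVec_of_ne_zero {ι K : Type*} [Fintype ι] [DecidableEq ι] [Field K]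
    (d u v : ι → K) (hd : ∀ i, d i ≠ 0) :
    (diagonal d + vecMulVec u v).det = ∏ i, d i + ∑ i, u i * v i * ∏ k ∈ univ.erase i, d k := by
  have hfactor : diagonal d + vecMulVec u v = diagonal d * (1 + vecMulVec (u / d) v) := by
    ext i j
    simp only [diagonal_mul, Matrix.add_apply, diagonal_apply, one_apply, vecMulVec_apply,
      Pi.div_apply, mul_add, div_mul_eq_mul_div, mul_div_assoc', mul_div_cancel_left₀ _ (hd i)]
    split_ifs with hij <;> simp [hij]
  rw [hfactor, det_mul, det_diagonal, vecMulVec_eq Unit, det_one_add_replicateCol_mul_replicateRow,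
    mul_add, mul_one, dotProduct, mul_sum]
  congr 1
  refine sum_congr rfl fun i _ => ?_
  rw [← mul_prod_erase univ d (mem_univ i), Pi.div_apply]
  field_simp [hd i]

theorem det_diagonal_add_vecMulVec {ι : Type*} [Fintype ι] [DecidableEq ι] (d u v : ι → ℝ) :
    (diagonal d + vecMulVec u v).det = ∏ i, d i + ∑ i, u i * v i * ∏ k ∈ univ.erase i, d k := by
  have hdense : Dense {d : ι → ℝ | ∀ i, d i ≠ 0} := by
    simpa [Set.pi] using dense_pi (s := fun _ : ι => ({0}ᶜ : Set ℝ)) Set.univ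
      fun _ _ => dense_compl_singleton 0
  refine congrFun (Continuous.ext_on hdense (f := fun d => (diagonal d + vecMulVec u v).det) ?_ ?_
    fun d hd => det_diagonal_add_vecMulVec_of_ne_zero d u v hd) d
  · fun_prop
  · fun_prop

theorem prod_add_sum_mul_prod_erase_eq {ι R : Type*} [Fintype ι] [DecidableEq ι] [CommRing R]
    (d w : ι → R) (a : ι) :
    ∏ i, d i + ∑ i, w i * ∏ k ∈ univ.erase i, d k =
      (d a + w a) * ∏ i ∈ univ.erase a, d i +
        d a * ∑ i ∈ univ.erase a, (∏ k ∈ (univ.erase a).erase i, d k) * w i := by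
  have hterm : ∀ i ∈ univ.erase a,
      w i * ∏ k ∈ univ.erase i, d k = d a * ((∏ k ∈ (univ.erase a).erase i, d k) * w i) := by
    intro i hi
    rw [← mul_prod_erase (univ.erase i) d (mem_erase.2 ⟨(ne_of_mem_erase hi).symm, mem_univ a⟩),
      erase_right_comm]
    ring
  rw [← add_sum_erase _ _ (mem_univ a), ← mul_prod_erase univ d (mem_univ a), sum_congr rfl hterm,
    mul_sum]
  ring

theorem deriv_deriv_div_self {F : ℝ → ℝ} {t : ℝ} (hF : DifferentiableAt ℝ F t)
    (hF' : DifferentiableAt ℝ (deriv F) t) (hFt : F t ≠ 0) :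
    deriv (fun s => deriv F s / F s) t = deriv (deriv F) t / F t - (deriv F t / F t) ^ 2 := by
  rw [deriv_fun_div hF' hF hFt]
  field_simp

theorem stmt_0_general (n : ℕ) (F : Fin (n + 1) → ℝ → ℝ)
    (hC2 : ∀ i, ContDiff ℝ 2 (F i))
    (hne : ∀ i t, F i t ≠ 0)
    (f : (Fin (n + 1) → ℝ) → ℝ)
    (hf : ∀ x, f x = ∏ i, F i (x i))
    (x : Fin (n + 1) → ℝ) :
    (hessian f x).det =
      f x ^ (n + 1) *
        ((deriv (deriv (F 0)) (x 0) / F 0 (x 0)) *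
            ∏ i ∈ univ.erase (0 : Fin (n + 1)),
              deriv (fun t => deriv (F i) t / F i t) (x i) +
          deriv (fun t => deriv (F 0) t / F 0 t) (x 0) *
            ∑ i ∈ univ.erase (0 : Fin (n + 1)),
              (∏ k ∈ (univ.erase (0 : Fin (n + 1))).erase i,
                  deriv (fun t => deriv (F k) t / F k t) (x k)) *
                (deriv (F i) (x i) / F i (x i)) ^ 2) := by
  set d : Fin (n + 1) → ℝ := fun i => deriv (fun t => deriv (F i) t / F i t) (x i)
  set g : Fin (n + 1) → ℝ := fun i => deriv (F i) (x i) / F i (x i)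
  have hd : ∀ i, d i = deriv (deriv (F i)) (x i) / F i (x i) - g i ^ 2 := fun i =>
    deriv_deriv_div_self ((hC2 i).differentiable two_ne_zero _)
      ((hC2 i).differentiable_deriv_two _) (hne i (x i))
  have hH : hessian f x = f x • (diagonal d + vecMulVec g g) := by
    rw [show f = fun y => ∏ i, F i (y i) from funext hf, hessian_prod F x fun i => hne i (x i)]
    congr 1
    ext i j
    simp only [of_apply, Matrix.add_apply, diagonal_apply, vecMulVec_apply, hd]
    split_ifs with hij
    · subst hij
      ring
    · simp [g]
  have hd0 : d 0 + g 0 * g 0 = deriv (deriv (F 0)) (x 0) / F 0 (x 0) := by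
    rw [hd]
    ring
  rw [hH, det_smul, Fintype.card_fin, det_diagonal_add_vecMulVec,
    prod_add_sum_mul_prod_erase_eq d (fun i => g i * g i) 0, hd0]
  simp only [sq]
  rfl

/-- Lemma 3.1: the Hessian determinant of a multiplicatively separable
(homothetical) function `f(x₁,…,xₙ) = f₁(x₁)⋯fₙ(xₙ)` with nonvanishing C²
components having nonvanishing first derivatives. -/
theorem stmt_0 (n : ℕ) (F : Fin (n + 1) → ℝ → ℝ)
    (hC2 : ∀ i, ContDiff ℝ 2 (F i))
    (hne : ∀ i t, F i t ≠ 0)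
    (hde : ∀ i t, deriv (F i) t ≠ 0)
    (f : (Fin (n + 1) → ℝ) → ℝ)
    (hf : ∀ x, f x = ∏ i, F i (x i))
    (x : Fin (n + 1) → ℝ) :
    (hessian f x).det =
      f x ^ (n + 1) *
        ((deriv (deriv (F 0)) (x 0) / F 0 (x 0)) *
            ∏ i ∈ univ.erase (0 : Fin (n + 1)),
              deriv (fun t => deriv (F i) t / F i t) (x i) +
          deriv (fun t => deriv (F 0) t / F 0 t) (x 0) *
            ∑ i ∈ univ.erase (0 : Fin (n + 1)),
              (∏ k ∈ (univ.erase (0 : Fin (n + 1))).erase i,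
                  deriv (fun t => deriv (F k) t / F k t) (x k)) *
                (deriv (F i) (x i) / F i (x i)) ^ 2) :=
  stmt_0_general n F hC2 hne f hf x
end

section
/- Let n ≥ 2 and let f₁,…,fₙ : ℝ₊ → ℝ₊ be smooth functions with nonvanishing first derivatives such that (fᵢ'/fᵢ)'(t) ≠ 0 for every i and every t > 0, and let f(x₁,…,xₙ) = f₁(x₁)·…·fₙ(xₙ) on ℝ₊ⁿ. Then the Hessian determinant of f vanishes identically on ℝ₊ⁿ if and only if there exist nonzero constants γ₁,…,γₙ, α₁,…,αₙ with Σ_{i=1}^{n} αᵢ = 1 and constants β₁,…,βₙ such that fᵢ(t) = γᵢ (t + βᵢ)^{αᵢ} for every i; in particular, when all βᵢ = 0, f is a generalized Cobb–Douglas function γ x₁^{α₁}·…·xₙ^{αₙ} with constant return to scale. -/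
open Real Finset

lemma diffAt_of_cd {F : ℝ → ℝ} (hsm : ContDiffOn ℝ (⊤ : ℕ∞) F (Set.Ioi 0)) {t : ℝ} (ht : 0 < t) :
    DifferentiableAt ℝ F t :=
  (hsm.contDiffAt (Ioi_mem_nhds ht)).differentiableAt (by simp)

lemma diffAt_deriv {F : ℝ → ℝ} (hsm : ContDiffOn ℝ (⊤ : ℕ∞) F (Set.Ioi 0)) {t : ℝ} (ht : 0 < t) :
    DifferentiableAt ℝ (deriv F) t :=
  ((hsm.deriv_of_isOpen isOpen_Ioi (m := 1) (WithTop.coe_le_coe.2 le_top)).contDiffAt (Ioi_mem_nhds ht)).differentiableAt one_ne_zero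

lemma deriv_w {F : ℝ → ℝ} (hsm : ContDiffOn ℝ (⊤ : ℕ∞) F (Set.Ioi 0))
    (hpos : ∀ t > (0:ℝ), 0 < F t) {t : ℝ} (ht : 0 < t) :
    deriv (fun s => deriv F s / F s) t =
      deriv (deriv F) t / F t - (deriv F t / F t)^2 := by
  rw [deriv_fun_div (diffAt_deriv hsm ht) (diffAt_of_cd hsm ht) (hpos t ht).ne']
  have h := (hpos t ht).ne'
  field_simp

lemma pd1 {n : ℕ} (F : Fin n → ℝ → ℝ) (hsm : ∀ i, ContDiffOn ℝ (⊤ : ℕ∞) (F i) (Set.Ioi 0))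
    (f : (Fin n → ℝ) → ℝ) (hf : ∀ x : Fin n → ℝ, (∀ i, 0 < x i) → f x = ∏ i, F i (x i))
    (j : Fin n) (y : Fin n → ℝ) (hy : ∀ i, 0 < y i) :
    pderiv' f j y = deriv (F j) (y j) * ∏ k ∈ univ.erase j, F k (y k) := by
  have hev : (fun t => f (Function.update y j t)) =ᶠ[nhds (y j)]
      (fun t => F j t * ∏ k ∈ univ.erase j, F k (y k)) := by
    filter_upwards [Ioi_mem_nhds (hy j)] with t ht
    have hp : ∀ i, 0 < Function.update y j t i := by
      intro i; rcases eq_or_ne i j with rfl | h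
      · simpa using ht
      · rw [Function.update_of_ne h]; exact hy i
    rw [hf _ hp, ← Finset.mul_prod_erase univ _ (mem_univ j)]
    congr 1
    · simp
    · exact Finset.prod_congr rfl fun k hk => by
        rw [Function.update_of_ne (Finset.ne_of_mem_erase hk)]
  unfold pderiv'
  rw [hev.deriv_eq, deriv_mul_const (diffAt_of_cd (hsm j) (hy j))]

lemma det_diag_add_mul {n : ℕ} (d u : Fin n → ℝ) (hd : ∀ i, d i ≠ 0) :
    (Matrix.of fun i j => (if i = j then d i else 0) + u i * u j).det
      = (∏ i, d i) * (1 + ∑ i, u i * u i / d i) := by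
  have key : (Matrix.of fun i j => (if i = j then d i else 0) + u i * u j)
      = Matrix.diagonal d * (1 + Matrix.replicateCol Unit (fun i => u i / d i) * Matrix.replicateRow Unit u) := by
    ext i j
    simp only [Matrix.mul_apply, Matrix.diagonal, Matrix.one_apply, Matrix.of_apply,
      Matrix.add_apply, Matrix.replicateCol_apply, Matrix.replicateRow_apply, mul_add, Finset.sum_add_distrib,
      Matrix.mul_apply, Finset.univ_unique, Finset.sum_const, Finset.card_singleton, one_smul]
    rw [Finset.sum_eq_single i, Finset.sum_eq_single i] <;>
      try (intro b _ hb; simp [hb, Ne.symm hb])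
    · rcases eq_or_ne i j with rfl | h
      · simp; field_simp [hd i]
      · simp [h]; field_simp [hd i]
    · simp
    · simp
  rw [key, Matrix.det_mul, Matrix.det_diagonal, Matrix.det_one_add_replicateCol_mul_replicateRow]
  congr 2
  simp only [dotProduct]
  exact Finset.sum_congr rfl fun i _ => by rw [mul_div_assoc]
lemma hess_entry {n : ℕ} (F : Fin n → ℝ → ℝ) (hsm : ∀ i, ContDiffOn ℝ (⊤ : ℕ∞) (F i) (Set.Ioi 0))
    (hpos : ∀ i, ∀ t > (0:ℝ), 0 < F i t)
    (f : (Fin n → ℝ) → ℝ) (hf : ∀ x : Fin n → ℝ, (∀ i, 0 < x i) → f x = ∏ i, F i (x i))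
    (i j : Fin n) (x : Fin n → ℝ) (hx : ∀ k, 0 < x k) :
    hessian f x i j = (∏ k, F k (x k)) *
      ((if i = j then deriv (fun s => deriv (F i) s / F i s) (x i) else 0)
        + (deriv (F i) (x i) / F i (x i)) * (deriv (F j) (x j) / F j (x j))) := by
  have hupd : ∀ t > (0:ℝ), ∀ k, 0 < Function.update x i t k := by
    intro t ht k; rcases eq_or_ne k i with rfl | h
    · simpa using ht
    · rw [Function.update_of_ne h]; exact hx k
  have key : hessian f x i j = deriv (fun t => pderiv' f j (Function.update x i t)) (x i) := rfl
  rcases eq_or_ne i j with rfl | hij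
  · -- diagonal case
    have hev : (fun t => pderiv' f i (Function.update x i t)) =ᶠ[nhds (x i)]
        (fun t => deriv (F i) t * ∏ k ∈ univ.erase i, F k (x k)) := by
      filter_upwards [Ioi_mem_nhds (hx i)] with t ht
      rw [pd1 F hsm f hf i _ (hupd t ht)]
      simp only [Function.update_self]
      congr 1
      exact Finset.prod_congr rfl fun k hk => by
        rw [Function.update_of_ne (Finset.ne_of_mem_erase hk)]
    rw [key, hev.deriv_eq, deriv_mul_const (diffAt_deriv (hsm i) (hx i))]
    rw [deriv_w (hsm i) (hpos i) (hx i), ← Finset.mul_prod_erase univ _ (mem_univ i)]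
    have h0 := (hpos i (x i) (hx i)).ne'
    rw [if_pos rfl]
    field_simp
    ring
  · -- off-diagonal case
    have hmem : i ∈ univ.erase j := Finset.mem_erase.2 ⟨hij, mem_univ i⟩
    have hev : (fun t => pderiv' f j (Function.update x i t)) =ᶠ[nhds (x i)]
        (fun t => deriv (F j) (x j) * (F i t * ∏ k ∈ (univ.erase j).erase i, F k (x k))) := by
      filter_upwards [Ioi_mem_nhds (hx i)] with t ht
      rw [pd1 F hsm f hf j _ (hupd t ht)]
      rw [Function.update_of_ne hij.symm, ← Finset.mul_prod_erase _ _ hmem,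
        Function.update_self]
      congr 2
      exact Finset.prod_congr rfl fun k hk => by
        rw [Function.update_of_ne (Finset.ne_of_mem_erase hk)]
    rw [key, hev.deriv_eq, deriv_const_mul _ ((diffAt_of_cd (hsm i) (hx i)).mul_const _),
      deriv_mul_const (diffAt_of_cd (hsm i) (hx i))]
    have hP : (∏ k, F k (x k)) = F j (x j) * (F i (x i) * ∏ k ∈ (univ.erase j).erase i, F k (x k)) := by
      rw [← Finset.mul_prod_erase univ _ (mem_univ j), ← Finset.mul_prod_erase _ _ hmem]
    rw [hP, if_neg hij]
    have h0i := (hpos i (x i) (hx i)).ne'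
    have h0j := (hpos j (x j) (hx j)).ne'
    field_simp
    ring

lemma hess_det {n : ℕ} (F : Fin n → ℝ → ℝ) (hsm : ∀ i, ContDiffOn ℝ (⊤ : ℕ∞) (F i) (Set.Ioi 0))
    (hpos : ∀ i, ∀ t > (0:ℝ), 0 < F i t)
    (hlog : ∀ i, ∀ t > (0 : ℝ), deriv (fun s => deriv (F i) s / F i s) t ≠ 0)
    (f : (Fin n → ℝ) → ℝ) (hf : ∀ x : Fin n → ℝ, (∀ i, 0 < x i) → f x = ∏ i, F i (x i))
    (x : Fin n → ℝ) (hx : ∀ k, 0 < x k) :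
    (hessian f x).det = (∏ k, F k (x k))^n *
      ((∏ i, deriv (fun s => deriv (F i) s / F i s) (x i)) *
        (1 + ∑ i, (deriv (F i) (x i) / F i (x i)) * (deriv (F i) (x i) / F i (x i)) /
          deriv (fun s => deriv (F i) s / F i s) (x i))) := by
  set d : Fin n → ℝ := fun i => deriv (fun s => deriv (F i) s / F i s) (x i) with hd
  set u : Fin n → ℝ := fun i => deriv (F i) (x i) / F i (x i) with hu
  have hM : hessian f x = (∏ k, F k (x k)) •
      (Matrix.of fun i j => (if i = j then d i else 0) + u i * u j) := by
    ext i j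
    rw [hess_entry F hsm hpos f hf i j x hx]
    simp [Matrix.smul_apply, mul_add, hd, hu]
  rw [hM, Matrix.det_smul, det_diag_add_mul d u (fun i => hlog i (x i) (hx i))]
  simp [hd, hu]

lemma const_on_Ioi {g : ℝ → ℝ} (hdiff : ∀ t > (0:ℝ), DifferentiableAt ℝ g t)
    (hg : ∀ t > (0:ℝ), deriv g t = 0) {t : ℝ} (ht : 0 < t) : g t = g 1 := by
  have ha : 0 < min t 1 := lt_min ht one_pos
  have hcont : ContinuousOn g (Set.Icc (min t 1) (max t 1)) := fun y hy =>
    (hdiff y (lt_of_lt_of_le ha hy.1)).continuousAt.continuousWithinAt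
  have hder : ∀ y ∈ Set.Ico (min t 1) (max t 1), HasDerivWithinAt g 0 (Set.Ici y) y := by
    intro y hy
    have hy0 : 0 < y := lt_of_lt_of_le ha hy.1
    have h := (hdiff y hy0).hasDerivAt.hasDerivWithinAt (s := Set.Ici y)
    rwa [hg y hy0] at h
  have key := constant_of_has_deriv_right_zero hcont hder
  have h1 := key t ⟨min_le_left _ _, le_max_left _ _⟩
  have h2 := key 1 ⟨min_le_right _ _, le_max_right _ _⟩
  rw [h1, h2]

lemma power_of_log_deriv {F : ℝ → ℝ}
    (hdiff : ∀ t > (0:ℝ), DifferentiableAt ℝ F t)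
    (hpos : ∀ t > (0:ℝ), 0 < F t) {α β : ℝ} (hβ : 0 ≤ β)
    (hw : ∀ t > (0:ℝ), deriv F t / F t = α / (t + β)) :
    ∀ t > (0:ℝ), F t = (F 1 / (1+β) ^ α) * (t + β) ^ α := by
  have hG : ∀ t > (0:ℝ), HasDerivAt (fun s => Real.log (F s) - α * Real.log (s + β)) 0 t := by
    intro t ht
    have htβ : 0 < t + β := by linarith
    have h1 : HasDerivAt (fun s => Real.log (F s)) ((F t)⁻¹ * deriv F t) t :=
      (Real.hasDerivAt_log (hpos t ht).ne').comp t (hdiff t ht).hasDerivAt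
    have h2 : HasDerivAt (fun s => Real.log (s + β)) ((t + β)⁻¹ * 1) t :=
      ((Real.hasDerivAt_log htβ.ne').comp t ((hasDerivAt_id t).add_const β) :)
    have h3 := h1.sub (h2.const_mul α)
    have he : (F t)⁻¹ * deriv F t - α * ((t + β)⁻¹ * 1) = 0 := by
      rw [mul_one, inv_mul_eq_div, hw t ht, ← div_eq_mul_inv, sub_self]
    rwa [he] at h3
  have hc : ∀ t > (0:ℝ),
      Real.log (F t) - α * Real.log (t + β) = Real.log (F 1) - α * Real.log (1 + β) := by
    intro t ht
    exact const_on_Ioi (fun s hs => (hG s hs).differentiableAt) (fun s hs => (hG s hs).deriv) ht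
  intro t ht
  have htβ : 0 < t + β := by linarith
  have h1β : 0 < 1 + β := by linarith
  have := hc t ht
  calc F t = Real.exp (Real.log (F t)) := (Real.exp_log (hpos t ht)).symm
    _ = Real.exp ((Real.log (F 1) - α * Real.log (1+β)) + α * Real.log (t+β)) := by
        congr 1; linarith
    _ = (F 1 / (1+β) ^ α) * (t + β) ^ α := by
        rw [Real.exp_add, Real.exp_sub, Real.exp_log (hpos 1 one_pos),
          Real.rpow_def_of_pos h1β, Real.rpow_def_of_pos htβ, mul_comm (Real.log (1+β)),
          mul_comm (Real.log (t+β))]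

lemma w_of_power {F : ℝ → ℝ} {γ α β : ℝ} (hγ : γ ≠ 0) (hβ : 0 ≤ β)
    (hF : ∀ t > (0:ℝ), F t = γ * (t + β) ^ α) :
    ∀ t > (0:ℝ), deriv F t / F t = α / (t + β) := by
  intro t ht
  have htβ : 0 < t + β := by linarith
  have hEv : F =ᶠ[nhds t] fun s => γ * (s + β) ^ α := by
    filter_upwards [Ioi_mem_nhds ht] with s hs
    exact hF s hs
  have h1 : HasDerivAt (fun s : ℝ => s + β) 1 t := (hasDerivAt_id t).add_const β
  have h2 : HasDerivAt (fun s : ℝ => (s + β) ^ α) (α * (t+β) ^ (α-1) * 1) t :=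
    ((Real.hasDerivAt_rpow_const (p := α) (Or.inl htβ.ne')).comp t h1 :)
  have hD : deriv F t = γ * (α * (t+β) ^ (α-1) * 1) := by
    rw [hEv.deriv_eq]
    exact (h2.const_mul γ).deriv
  rw [hD, hF t ht, show (t+β) ^ (α-1) = (t+β) ^ α / (t+β) by
    rw [Real.rpow_sub htβ, Real.rpow_one]]
  have hne := (Real.rpow_pos_of_pos htβ α).ne'
  field_simp

lemma d_of_w {F : ℝ → ℝ} {α β : ℝ} (hβ : 0 ≤ β)
    (hw : ∀ t > (0:ℝ), deriv F t / F t = α / (t + β)) :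
    ∀ t > (0:ℝ), deriv (fun s => deriv F s / F s) t = -α / (t+β)^2 := by
  intro t ht
  have htβ : 0 < t + β := by linarith
  have hEv : (fun s => deriv F s / F s) =ᶠ[nhds t] fun s => α * (s + β)⁻¹ := by
    filter_upwards [Ioi_mem_nhds ht] with s hs
    rw [hw s hs, div_eq_mul_inv]
  have h1 : HasDerivAt (fun s : ℝ => s + β) 1 t := (hasDerivAt_id t).add_const β
  have h2 : HasDerivAt (fun s : ℝ => (s + β)⁻¹) (-((t+β)^2)⁻¹ * 1) t :=
    (hasDerivAt_inv htβ.ne').comp t h1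
  rw [hEv.deriv_eq, (h2.const_mul α).deriv]
  field_simp
/-- Corollary 4.1: for a homothetical function `f = f₁(x₁)⋯fₙ(xₙ)` on `ℝ₊ⁿ`
whose smooth positive components have nonvanishing first derivatives and
satisfy `(fᵢ'/fᵢ)' ≠ 0` everywhere, the Hessian determinant vanishes
identically on `ℝ₊ⁿ` iff each component is `fᵢ(t) = γᵢ (t + βᵢ)^{αᵢ}` with
`∑ αᵢ = 1`; in particular when all `βᵢ = 0`, `f` is a generalized
Cobb–Douglas function with constant return to scale. -/
theorem stmt_4 (n : ℕ) (hn : 2 ≤ n) (F : Fin n → ℝ → ℝ)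
    (hsm : ∀ i, ContDiffOn ℝ (⊤ : ℕ∞) (F i) (Set.Ioi 0))
    (hpos : ∀ i, ∀ t > (0 : ℝ), 0 < F i t)
    (hde : ∀ i, ∀ t > (0 : ℝ), deriv (F i) t ≠ 0)
    (hlog : ∀ i, ∀ t > (0 : ℝ), deriv (fun s => deriv (F i) s / F i s) t ≠ 0)
    (f : (Fin n → ℝ) → ℝ)
    (hf : ∀ x : Fin n → ℝ, (∀ i, 0 < x i) → f x = ∏ i, F i (x i)) :
    (∀ x : Fin n → ℝ, (∀ i, 0 < x i) → (hessian f x).det = 0) ↔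
      ∃ γ α β : Fin n → ℝ, (∀ i, γ i ≠ 0) ∧ (∀ i, α i ≠ 0) ∧ (∑ i, α i) = 1 ∧
        (∀ i, ∀ t > (0 : ℝ), F i t = γ i * (t + β i) ^ (α i)) ∧
        ((∀ i, β i = 0) → ∀ x : Fin n → ℝ, (∀ i, 0 < x i) →
          f x = (∏ i, γ i) * ∏ i, (x i) ^ (α i)) := by
  constructor
  · intro hdet
    have hwne : ∀ i, ∀ t > (0:ℝ), deriv (F i) t / F i t ≠ 0 := fun i t ht =>
      div_ne_zero (hde i t ht) (hpos i t ht).ne'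
    set φ : Fin n → ℝ → ℝ := fun i t =>
      (deriv (F i) t / F i t) * (deriv (F i) t / F i t) /
        deriv (fun s => deriv (F i) s / F i s) t with hφ
    have hsum : ∀ x : Fin n → ℝ, (∀ k, 0 < x k) → 1 + ∑ i, φ i (x i) = 0 := by
      intro x hx
      have h := hdet x hx
      rw [hess_det F hsm hpos hlog f hf x hx] at h
      have hP : (∏ k, F k (x k)) ^ n ≠ 0 :=
        pow_ne_zero _ (Finset.prod_ne_zero_iff.2 fun k _ => (hpos k (x k) (hx k)).ne')
      have hD : (∏ i, deriv (fun s => deriv (F i) s / F i s) (x i)) ≠ 0 :=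
        Finset.prod_ne_zero_iff.2 fun i _ => hlog i (x i) (hx i)
      rcases mul_eq_zero.1 h with h' | h'
      · exact absurd h' hP
      rcases mul_eq_zero.1 h' with h'' | h''
      · exact absurd h'' hD
      simp only [hφ]
      exact h''
    have hone : ∀ k : Fin n, (0:ℝ) < (fun _ : Fin n => (1:ℝ)) k := fun _ => one_pos
    have h1 := hsum (fun _ => 1) hone
    have hconst : ∀ i, ∀ t > (0:ℝ), φ i t = φ i 1 := by
      intro i t ht
      have h1' := hsum (fun _ => 1) hone
      have hx : ∀ k, 0 < Function.update (fun _ : Fin n => (1:ℝ)) i t k := by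
        intro k; rcases eq_or_ne k i with rfl | h
        · simpa using ht
        · rw [Function.update_of_ne h]; exact one_pos
      have h2 := hsum _ hx
      rw [← Finset.add_sum_erase univ
        (fun j => φ j (Function.update (fun _ : Fin n => (1:ℝ)) i t j)) (mem_univ i)] at h2
      rw [← Finset.add_sum_erase univ (fun j => φ j (1:ℝ)) (mem_univ i)] at h1'
      have he : ∑ j ∈ univ.erase i, φ j (Function.update (fun _ : Fin n => (1:ℝ)) i t j)
          = ∑ j ∈ univ.erase i, φ j 1 :=
        Finset.sum_congr rfl fun j hj => by
          rw [Function.update_of_ne (Finset.ne_of_mem_erase hj)]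
      rw [Function.update_self, he] at h2
      linarith [h1', h2]
    set α : Fin n → ℝ := fun i => -φ i 1 with hαdef
    have hαne : ∀ i, α i ≠ 0 := by
      intro i
      simp only [hαdef, hφ, neg_ne_zero]
      exact div_ne_zero (mul_ne_zero (hwne i 1 one_pos) (hwne i 1 one_pos)) (hlog i 1 one_pos)
    have hαsum : ∑ i, α i = 1 := by
      have hh : ∑ i, α i = -∑ i, φ i 1 := by simp [hαdef]
      rw [hh]; linarith [h1]
    set β : Fin n → ℝ := fun i => α i / (deriv (F i) 1 / F i 1) - 1 with hβdef
    have hwt : ∀ i, ∀ t > (0:ℝ), α i / (deriv (F i) t / F i t) = t + β i := by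
      intro i t ht
      have hdiffw : ∀ s, 0 < s → DifferentiableAt ℝ (fun s' => deriv (F i) s' / F i s') s :=
        fun s hs => (diffAt_deriv (hsm i) hs).div (diffAt_of_cd (hsm i) hs) (hpos i s hs).ne'
      have hode : ∀ s > (0:ℝ),
          HasDerivAt (fun s' => α i / (deriv (F i) s' / F i s') - s') 0 s := by
        intro s hs
        have hw := hwne i s hs
        have hD := (hasDerivAt_const s (α i)).div (hdiffw s hs).hasDerivAt hw
        have hc : (deriv (F i) s / F i s) * (deriv (F i) s / F i s)
            / deriv (fun s' => deriv (F i) s' / F i s') s = -α i := by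
          have hcc := hconst i s hs
          simp only [hφ] at hcc
          rw [hcc]
          simp only [hαdef, hφ, neg_neg]
        rw [div_eq_iff (hlog i s hs)] at hc
        have hzero : (0 * (deriv (F i) s / F i s)
            - α i * deriv (fun s' => deriv (F i) s' / F i s') s)
              / (deriv (F i) s / F i s) ^ 2 - 1 = 0 := by
          have h2 : -(α i * deriv (fun s' => deriv (F i) s' / F i s') s)
              = (deriv (F i) s / F i s) * (deriv (F i) s / F i s) := by linarith [hc]
          rw [zero_mul, zero_sub, h2, ← sq, div_self (pow_ne_zero 2 hw), sub_self]
        have hfinal := hD.sub (hasDerivAt_id s)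
        rw [hzero] at hfinal
        exact hfinal
      have hg := const_on_Ioi (fun s hs => (hode s hs).differentiableAt)
        (fun s hs => (hode s hs).deriv) ht
      simp only [hβdef]
      linarith [hg]
    have hβpos : ∀ i, 0 ≤ β i := by
      intro i
      by_contra hneg
      push_neg at hneg
      have ht0 : (0:ℝ) < -β i := by linarith
      have hv := hwt i (-β i) ht0
      rw [show -β i + β i = 0 by ring] at hv
      rcases div_eq_zero_iff.1 hv with h | h
      · exact hαne i h
      · exact hwne i (-β i) ht0 h
    have hwval : ∀ i, ∀ t > (0:ℝ), deriv (F i) t / F i t = α i / (t + β i) := by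
      intro i t ht
      have h := hwt i t ht
      have htβ : 0 < t + β i := by linarith [hβpos i]
      have hw := hwne i t ht
      rw [div_eq_iff hw] at h
      rw [eq_div_iff htβ.ne', h]
      ring
    set γ : Fin n → ℝ := fun i => F i 1 / (1 + β i) ^ (α i) with hγdef
    have hform : ∀ i, ∀ t > (0:ℝ), F i t = γ i * (t + β i) ^ (α i) := by
      intro i t ht
      exact power_of_log_deriv (fun s hs => diffAt_of_cd (hsm i) hs) (hpos i)
        (hβpos i) (hwval i) t ht
    have hγne : ∀ i, γ i ≠ 0 := fun i => div_ne_zero (hpos i 1 one_pos).ne'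
      (Real.rpow_pos_of_pos (by linarith [hβpos i] : (0:ℝ) < 1 + β i) _).ne'
    refine ⟨γ, α, β, hγne, hαne, hαsum, hform, ?_⟩
    intro hβ0 x hx
    rw [hf x hx, ← Finset.prod_mul_distrib]
    exact Finset.prod_congr rfl fun i _ => by
      rw [hform i (x i) (hx i), hβ0 i, add_zero]
  · rintro ⟨γ, α, β, hγ, hα, hαsum, hform, -⟩ x hx
    rw [hess_det F hsm hpos hlog f hf x hx]
    have hβpos : ∀ i, 0 ≤ β i := by
      intro i
      by_contra hneg
      push_neg at hneg
      have ht0 : (0:ℝ) < -β i := by linarith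
      have h := hform i (-β i) ht0
      rw [show -β i + β i = 0 by ring, Real.zero_rpow (hα i), mul_zero] at h
      exact (hpos i (-β i) ht0).ne' h
    have hwv : ∀ i, ∀ t > (0:ℝ), deriv (F i) t / F i t = α i / (t + β i) :=
      fun i => w_of_power (hγ i) (hβpos i) (hform i)
    have hzero : (1 : ℝ) + ∑ i, (deriv (F i) (x i) / F i (x i)) *
        (deriv (F i) (x i) / F i (x i)) /
          deriv (fun s => deriv (F i) s / F i s) (x i) = 0 := by
      have hsummand : ∀ i : Fin n, (deriv (F i) (x i) / F i (x i)) *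
          (deriv (F i) (x i) / F i (x i)) /
            deriv (fun s => deriv (F i) s / F i s) (x i) = -α i := by
        intro i
        have htβ : 0 < x i + β i := by linarith [hβpos i, hx i]
        rw [hwv i (x i) (hx i), d_of_w (hβpos i) (hwv i) (x i) (hx i)]
        rw [div_mul_div_comm, div_div_div_eq]
        rw [div_eq_iff (by simp [hα i, htβ.ne'] : (x i + β i) * (x i + β i) * -α i ≠ 0)]
        ring
      rw [Finset.sum_congr rfl fun i _ => hsummand i, Finset.sum_neg_distrib, hαsum]
      ring
    rw [hzero, mul_zero, mul_zero]
end

section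
/- Let n ≥ 2, γ > 0 and let α₁,…,αₙ be nonzero real constants, and define the generalized Cobb–Douglas function f(x₁,…,xₙ) = γ x₁^{α₁}·…·xₙ^{αₙ} on ℝ₊ⁿ. Then the Hessian determinant of f vanishes identically on ℝ₊ⁿ if and only if Σ_{i=1}^{n} αᵢ = 1. -/
/-! The Hessian of `f = γ ∏ xᵢ ^ αᵢ` at a point of the positive orthant is
`f · (w wᵀ - diag (αᵢ / xᵢ²))` with `wᵢ = αᵢ / xᵢ`, a diagonal matrix plus a rank-one matrix,
because `∂ⱼ f = αⱼ f / xⱼ`. The matrix determinant lemma then gives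
`det H(f) = ∏ᵢ (-αᵢ f / xᵢ²) · (1 - ∑ αᵢ)`, whose first factor never vanishes. As partial
derivatives only see `f` along coordinate lines, `f` may be replaced by the Cobb–Douglas formula
on the open orthant. -/

open Real Finset

open Function Matrix

theorem Matrix.det_diagonal_add_replicateCol_mul_replicateRow {ι K : Type*} [Fintype ι]
    [DecidableEq ι] [Field K] {d : ι → K} (hd : ∀ i, d i ≠ 0) (u v : ι → K) :
    (diagonal d + replicateCol Unit u * replicateRow Unit v).det =
      (∏ i, d i) * (1 + ∑ i, v i * u i / d i) := by
  have hfactor : diagonal d + replicateCol Unit u * replicateRow Unit v =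
      diagonal d * (1 + replicateCol Unit (fun i => u i / d i) * replicateRow Unit v) := by
    ext i j
    rw [Matrix.mul_add, Matrix.mul_one, add_apply, add_apply, diagonal_mul]
    simp only [mul_apply, univ_unique, PUnit.default_eq_unit, replicateCol_apply,
      replicateRow_apply, sum_const, card_singleton, one_smul, add_right_inj]
    rw [← mul_assoc, mul_div_cancel₀ _ (hd i)]
  rw [hfactor, det_mul, det_diagonal, det_one_add_replicateCol_mul_replicateRow, dotProduct]
  simp only [mul_div_assoc]

section pderiv'

variable {n : ℕ}

theorem pderiv'_congr_of_eqOn {f g : (Fin n → ℝ) → ℝ} {s : Set (Fin n → ℝ)} (hs : IsOpen s)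
    (hfg : Set.EqOn f g s) {x : Fin n → ℝ} (hx : x ∈ s) (i : Fin n) :
    pderiv' f i x = pderiv' g i x := by
  have hline : update x i ⁻¹' s ∈ nhds (x i) :=
    (hasDerivAt_update x i (x i)).continuousAt.preimage_mem_nhds
      (by simpa using hs.mem_nhds hx)
  exact Filter.EventuallyEq.deriv_eq (Filter.eventually_of_mem hline fun t ht => hfg ht)

theorem hessian_congr_of_eqOn {f g : (Fin n → ℝ) → ℝ} {s : Set (Fin n → ℝ)} (hs : IsOpen s)
    (hfg : Set.EqOn f g s) {x : Fin n → ℝ} (hx : x ∈ s) : hessian f x = hessian g x := by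
  ext i j
  exact pderiv'_congr_of_eqOn hs (fun y hy => pderiv'_congr_of_eqOn hs hfg hy j) hx i

end pderiv'

noncomputable def cobbDouglas {n : ℕ} (γ : ℝ) (α x : Fin n → ℝ) : ℝ :=
  γ * ∏ i, x i ^ α i

namespace cobbDouglas

variable {n : ℕ} (γ : ℝ) (α : Fin n → ℝ)

theorem update_eq (x : Fin n → ℝ) (i : Fin n) (t : ℝ) :
    cobbDouglas γ α (update x i t) = (γ * ∏ k ∈ univ.erase i, x k ^ α k) * t ^ α i := by
  rw [cobbDouglas, ← mul_prod_erase univ _ (mem_univ i)]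
  simp only [update_self]
  rw [prod_congr rfl fun k hk => by rw [update_of_ne (ne_of_mem_erase hk)]]
  ring

theorem hasDerivAt_comp_update {x : Fin n → ℝ} {i : Fin n} (hx : 0 < x i) :
    HasDerivAt (fun t => cobbDouglas γ α (update x i t)) (α i / x i * cobbDouglas γ α x) (x i) := by
  have hx_eq : cobbDouglas γ α x = (γ * ∏ k ∈ univ.erase i, x k ^ α k) * x i ^ α i := by
    simpa using update_eq γ α x i (x i)
  simp only [update_eq]
  refine ((hasDerivAt_rpow_const (p := α i) (Or.inl hx.ne')).const_mul
    (γ * ∏ k ∈ univ.erase i, x k ^ α k)).congr_deriv ?_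
  rw [hx_eq, rpow_sub_one hx.ne']
  ring

theorem pderiv'_eq {x : Fin n → ℝ} {i : Fin n} (hx : 0 < x i) :
    pderiv' (cobbDouglas γ α) i x = α i / x i * cobbDouglas γ α x :=
  (hasDerivAt_comp_update γ α hx).deriv

theorem hessian_eq {x : Fin n → ℝ} (hx : ∀ i, 0 < x i) :
    hessian (cobbDouglas γ α) x =
      diagonal (fun i => -(α i / x i ^ 2 * cobbDouglas γ α x)) +
        replicateCol Unit (fun i => α i / x i * cobbDouglas γ α x) *
          replicateRow Unit (fun j => α j / x j) := by
  ext i j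
  have hline : (fun t => pderiv' (cobbDouglas γ α) j (update x i t)) =ᶠ[nhds (x i)]
      fun t => α j * (update x i t j)⁻¹ * cobbDouglas γ α (update x i t) := by
    filter_upwards [eventually_gt_nhds (hx i)] with t ht
    have hpos : 0 < update x i t j := by
      rcases eq_or_ne j i with rfl | hji
      · simpa using ht
      · simpa [update_of_ne hji] using hx j
    rw [pderiv'_eq γ α hpos, div_eq_mul_inv]
  have hcoord := hasDerivAt_pi.1 (hasDerivAt_update x i (x i)) j
  have hderiv : HasDerivAt (fun t => α j * (update x i t j)⁻¹ * cobbDouglas γ α (update x i t))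
      _ (x i) := ((hcoord.inv (by simpa using (hx j).ne')).const_mul (α j)).mul
    (hasDerivAt_comp_update γ α (hx i))
  change pderiv' (pderiv' _ j) i x = _
  rw [pderiv', hline.deriv_eq, hderiv.deriv]
  have hxi := (hx i).ne'
  rcases eq_or_ne i j with rfl | hij
  · simp only [Pi.single_eq_same, update_self, update_eq_self, Pi.inv_apply, Matrix.add_apply,
      diagonal_apply_eq, mul_apply, univ_unique, PUnit.default_eq_unit, replicateCol_apply,
      replicateRow_apply, sum_const, card_singleton, one_smul]
    field_simp
  · have hxj := (hx j).ne'
    simp only [Pi.single_eq_of_ne (Ne.symm hij), update_of_ne (Ne.symm hij), update_eq_self,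
      Pi.inv_apply, Matrix.add_apply, diagonal_apply_ne _ hij, mul_apply, univ_unique,
      PUnit.default_eq_unit, replicateCol_apply, replicateRow_apply, sum_const, card_singleton,
      one_smul, neg_zero, zero_div, mul_zero, zero_mul, zero_add]
    field_simp

theorem det_hessian_eq_zero_iff {γ : ℝ} (hγ : γ ≠ 0) {α : Fin n → ℝ} (hα : ∀ i, α i ≠ 0)
    {x : Fin n → ℝ} (hx : ∀ i, 0 < x i) :
    (hessian (cobbDouglas γ α) x).det = 0 ↔ ∑ i, α i = 1 := by
  have hg : cobbDouglas γ α x ≠ 0 :=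
    mul_ne_zero hγ (prod_ne_zero_iff.2 fun i _ => (rpow_pos_of_pos (hx i) _).ne')
  have hd : ∀ i, -(α i / x i ^ 2 * cobbDouglas γ α x) ≠ 0 := fun i => by
    have := (hx i).ne'
    simp [hα i, hg, this]
  have hsum : ∑ i, α i / x i * (α i / x i * cobbDouglas γ α x) /
      -(α i / x i ^ 2 * cobbDouglas γ α x) = -∑ i, α i := by
    rw [← sum_neg_distrib]
    refine sum_congr rfl fun i _ => ?_
    have := (hx i).ne'
    field_simp [hα i]
  rw [hessian_eq γ α hx, det_diagonal_add_replicateCol_mul_replicateRow hd, hsum,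
    mul_eq_zero, prod_eq_zero_iff]
  simp only [mem_univ, true_and, hd, exists_false, false_or]
  constructor <;> intro h <;> linarith

end cobbDouglas

theorem stmt_5_general (n : ℕ) (γ : ℝ) (hγ : 0 < γ)
    (α : Fin n → ℝ) (hα : ∀ i, α i ≠ 0)
    (f : (Fin n → ℝ) → ℝ)
    (hf : ∀ x : Fin n → ℝ, (∀ i, 0 < x i) → f x = γ * ∏ i, (x i) ^ (α i)) :
    (∀ x : Fin n → ℝ, (∀ i, 0 < x i) → (hessian f x).det = 0) ↔
      (∑ i, α i) = 1 := by
  set s := Set.univ.pi fun _ : Fin n => Set.Ioi (0 : ℝ) with hs_def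
  have hs : IsOpen s := isOpen_set_pi Set.finite_univ fun _ _ => isOpen_Ioi
  have hmem : ∀ x, x ∈ s ↔ ∀ i, 0 < x i := by simp [hs_def]
  have hfg : Set.EqOn f (cobbDouglas γ α) s := fun x hx => hf x ((hmem x).1 hx)
  have hdet : ∀ x, (∀ i, 0 < x i) → ((hessian f x).det = 0 ↔ ∑ i, α i = 1) := fun x hx => by
    rw [hessian_congr_of_eqOn hs hfg ((hmem x).2 hx),
      cobbDouglas.det_hessian_eq_zero_iff hγ.ne' hα hx]
  exact ⟨fun h => (hdet 1 fun _ => one_pos).1 (h 1 fun _ => one_pos), fun h x hx => (hdet x hx).2 h⟩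

/-- The generalized Cobb–Douglas function `f(x) = γ x₁^{α₁}⋯xₙ^{αₙ}` (with
`γ > 0` and nonzero exponents) has identically vanishing Hessian determinant
on `ℝ₊ⁿ` — i.e. the Cobb–Douglas hypersurface is developable — iff
`∑ αᵢ = 1` (constant return to scale). -/
theorem stmt_5 (n : ℕ) (hn : 2 ≤ n) (γ : ℝ) (hγ : 0 < γ)
    (α : Fin n → ℝ) (hα : ∀ i, α i ≠ 0)
    (f : (Fin n → ℝ) → ℝ)
    (hf : ∀ x : Fin n → ℝ, (∀ i, 0 < x i) → f x = γ * ∏ i, (x i) ^ (α i)) :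
    (∀ x : Fin n → ℝ, (∀ i, 0 < x i) → (hessian f x).det = 0) ↔
      (∑ i, α i) = 1 :=
  stmt_5_general n γ hγ α hα f hf
end

section
/- Let F : ℝ → ℝ be twice differentiable with F'(u) ≠ 0 for all u in its domain, let h₁,…,hₙ : ℝ₊ → ℝ be thrice differentiable nonvanishing functions with nonvanishing first derivatives, and let f(x₁,…,xₙ) = F(h₁(x₁)·…·hₙ(xₙ)) on ℝ₊ⁿ. Then the bordered Hessian (Allen) matrix of f is singular at every point if and only if one of the following holds (up to permutation of the variables): (a) there are nonzero constants γ, α₁, α₂ such that h₁(t)·h₂(s) can be written as γ e^{α₁ t + α₂ s} (i.e. two of the factors are exponentials); or (b) there are nonzero constants γ, α₁,…,αₙ with α₁ + … + αₙ = 0 and constants β₁,…,βₙ such that h₁(x₁)·…·hₙ(xₙ) = γ (x₁+β₁)^{α₁}·…·(xₙ+βₙ)^{αₙ}. -/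
/-!
Write `P = ∏ hᵢ(xᵢ)`, `gᵢ = hᵢ'/hᵢ` and `λ = F'(P) P ≠ 0`. The gradient of `f` is `λ g` and its
Hessian is `λ diag(gᵢ')` plus a rank-one matrix whose rows are multiples of `λ gᵀ`, so row
operations against the border remove it, and expanding the bordered diagonal matrix gives
`det H^B(f) = -λⁿ⁺¹ ∑ₖ gₖ² ∏_{l ≠ k} gₗ'`. Letting one coordinate vary at a time, this sum
vanishes on `ℝ₊ⁿ` iff either two of the `gᵢ'` vanish identically (so `gᵢ, gⱼ` are constant and
`hᵢ, hⱼ` exponential) or `gₖ² = cₖ gₖ'` for all `k` with `∑ cₖ = 0`. The Riccati equation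
`g² = c g'` says that `1/g` is affine, `g = -c/(t + β)`, i.e. `h ∝ (t + β)^{-c}`.
-/

open Real Finset

/-- The bordered Hessian (Allen) matrix of `f : ℝⁿ → ℝ`: the `(n+1)×(n+1)`
matrix whose first row and column are `(0, f_{x₁}, …, f_{xₙ})` and whose
remaining `n×n` block is the Hessian matrix. -/
noncomputable def borderedHessian {n : ℕ} (f : (Fin n → ℝ) → ℝ) (x : Fin n → ℝ) :
    Matrix (Fin (n + 1)) (Fin (n + 1)) ℝ :=
  Matrix.of fun i =>
    Fin.cases (motive := fun _ => Fin (n + 1) → ℝ)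
      (Fin.cons 0 fun j => pderiv' f j x)
      (fun i' => Fin.cons (pderiv' f i' x) fun j => pderiv' (pderiv' f j) i' x) i

open Set Filter Topology

namespace Matrix

variable {R : Type*} [CommRing R] {n : ℕ}

def bordered (b : Fin n → R) (A : Matrix (Fin n) (Fin n) R) :
    Matrix (Fin (n + 1)) (Fin (n + 1)) R :=
  Matrix.of fun i =>
    Fin.cases (motive := fun _ => Fin (n + 1) → R) (Fin.cons 0 b)
      (fun i' => Fin.cons (b i') (A i')) i

@[simp] lemma bordered_zero_zero (b : Fin n → R) (A : Matrix (Fin n) (Fin n) R) :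
    bordered b A 0 0 = 0 := rfl

@[simp] lemma bordered_zero_succ (b : Fin n → R) (A : Matrix (Fin n) (Fin n) R) (j : Fin n) :
    bordered b A 0 j.succ = b j := rfl

@[simp] lemma bordered_succ_zero (b : Fin n → R) (A : Matrix (Fin n) (Fin n) R) (i : Fin n) :
    bordered b A i.succ 0 = b i := rfl

@[simp] lemma bordered_succ_succ (b : Fin n → R) (A : Matrix (Fin n) (Fin n) R) (i j : Fin n) :
    bordered b A i.succ j.succ = A i j := rfl

lemma bordered_smul (a : R) (b : Fin n → R) (A : Matrix (Fin n) (Fin n) R) :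
    bordered (a • b) (a • A) = a • bordered b A := by
  ext i j
  cases i using Fin.cases <;> cases j using Fin.cases <;> simp

/-- Deleting the border row and the column of `b k` leaves, up to moving the border column
to position `k`, the matrix `A` with its `k`-th column replaced by `b`. -/
lemma det_submatrix_bordered (b : Fin n → R) (A : Matrix (Fin n) (Fin n) R) (k : Fin n) :
    ((bordered b A).submatrix Fin.succ k.succ.succAbove).det =
      (-1) ^ (k : ℕ) * (A.updateCol k b).det := by
  cases n with
  | zero => exact k.elim0
  | succ m =>
    have hperm : (bordered b A).submatrix Fin.succ k.succ.succAbove =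
        (A.updateCol k b).submatrix id k.cycleRange.symm := by
      ext r c
      cases c using Fin.cases <;> simp [Fin.succ_succAbove_succ]
    rw [hperm, det_permute', Equiv.Perm.sign_symm, Fin.sign_cycleRange]
    simp

theorem det_bordered (b : Fin n → R) (A : Matrix (Fin n) (Fin n) R) :
    (bordered b A).det = -(b ⬝ᵥ A.adjugate *ᵥ b) := by
  rw [det_succ_row_zero, Fin.sum_univ_succ, ← cramer_eq_adjugate_mulVec, dotProduct,
    ← sum_neg_distrib]
  simp only [bordered_zero_zero, mul_zero, zero_mul, zero_add, Fin.val_succ, bordered_zero_succ,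
    det_submatrix_bordered, cramer_apply]
  refine sum_congr rfl fun k _ => ?_
  have hsign : (-1 : R) ^ ((k : ℕ) + 1) * (-1) ^ (k : ℕ) = -1 := by
    rw [← pow_add, add_right_comm, ← two_mul, pow_succ, pow_mul, neg_one_sq, one_pow, one_mul]
  linear_combination (b k * (A.updateCol k b).det) * hsign

theorem det_bordered_add_vecMulVec (b c : Fin n → R) (A : Matrix (Fin n) (Fin n) R) :
    (bordered b (A + vecMulVec c b)).det = (bordered b A).det := by
  refine det_eq_of_forall_row_eq_smul_add_const (Fin.cons 0 c) 0 rfl fun i j => ?_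
  cases i using Fin.cases <;> cases j using Fin.cases <;> simp [vecMulVec_apply]

end Matrix

section AllenSum

variable {ι K α : Type*} [DecidableEq ι] {s : Set α}

lemma update_mem_of_forall_mem {x : ι → α} (hx : ∀ k, x k ∈ s) (j : ι) {t : α} (ht : t ∈ s)
    (k : ι) : Function.update x j t k ∈ s := by
  rcases eq_or_ne k j with rfl | hkj
  · simpa
  · simpa [Function.update_of_ne hkj] using hx k

variable [Fintype ι]

def allenSum [CommRing K] (b d : ι → K) : K :=
  ∑ k, b k ^ 2 * ∏ l ∈ univ.erase k, d l

theorem Matrix.det_bordered_diagonal [CommRing K] {n : ℕ} (b d : Fin n → K) :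
    (Matrix.bordered b (Matrix.diagonal d)).det = -allenSum b d := by
  simp only [Matrix.det_bordered, Matrix.adjugate_diagonal, Matrix.mulVec_diagonal, dotProduct,
    allenSum]
  congr 1
  exact sum_congr rfl fun k _ => by ring

lemma allenSum_update [CommRing K] (b d : ι → K) (j : ι) (β δ : K) :
    allenSum (Function.update b j β) (Function.update d j δ) =
      β ^ 2 * ∏ l ∈ univ.erase j, d l +
        δ * ∑ k ∈ univ.erase j, b k ^ 2 * ∏ l ∈ (univ.erase k).erase j, d l := by
  rw [allenSum, ← add_sum_erase _ _ (mem_univ j), mul_sum, Function.update_self]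
  congr 1
  · congr 1
    exact prod_congr rfl fun l hl => Function.update_of_ne (ne_of_mem_erase hl) _ _
  · refine sum_congr rfl fun k hk => ?_
    have hjk : j ∈ univ.erase k := mem_erase.2 ⟨(ne_of_mem_erase hk).symm, mem_univ j⟩
    rw [Function.update_of_ne (ne_of_mem_erase hk), ← mul_prod_erase _ _ hjk,
      Function.update_self,
      prod_congr rfl fun l hl => Function.update_of_ne (ne_of_mem_erase hl) _ _]
    ring

lemma allenSum_eq_zero_of_eq_zero [CommRing K] {b d : ι → K} {i j : ι} (hij : i ≠ j)
    (hi : d i = 0) (hj : d j = 0) : allenSum b d = 0 := by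
  refine sum_eq_zero fun k _ => ?_
  obtain ⟨l, hlk, hl⟩ : ∃ l, l ≠ k ∧ d l = 0 := by
    by_cases hik : i = k
    · exact ⟨j, hik ▸ hij.symm, hj⟩
    · exact ⟨i, hik, hi⟩
  rw [prod_eq_zero (mem_erase.2 ⟨hlk, mem_univ l⟩) hl, mul_zero]

lemma allenSum_eq_of_sq_eq_mul [CommRing K] {b d c : ι → K} (h : ∀ k, b k ^ 2 = c k * d k) :
    allenSum b d = (∑ k, c k) * ∏ l, d l := by
  simp only [allenSum, h, sum_mul, mul_assoc, mul_prod_erase _ _ (mem_univ _)]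

lemma allenSum_update_apply [CommRing K] {u v : ι → α → K} (x : ι → α) (j : ι) (t : α) :
    allenSum (fun k => u k (Function.update x j t k)) (fun k => v k (Function.update x j t k)) =
      u j t ^ 2 * ∏ l ∈ univ.erase j, v l (x l) +
        v j t * ∑ k ∈ univ.erase j, u k (x k) ^ 2 * ∏ l ∈ (univ.erase k).erase j, v l (x l) := by
  simp only [Function.apply_update (fun k => u k), Function.apply_update (fun k => v k)]
  exact allenSum_update _ _ j _ _

section Field

variable [Field K] {u v : ι → α → K}

/-- An identically vanishing `v i` leaves only the term `u i ^ 2 * ∏_{l ≠ i} v l`, which is nonzero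
at a point where no other `v l` vanishes. -/
lemma exists_ne_zero_of_allenSum_eq_zero (hs : s.Nonempty) (hu : ∀ k, ∀ t ∈ s, u k t ≠ 0)
    (H : ∀ x : ι → α, (∀ k, x k ∈ s) → allenSum (fun k => u k (x k)) (fun k => v k (x k)) = 0)
    (hv : ∀ i j, i ≠ j → (∀ t ∈ s, v i t = 0) → ∃ t ∈ s, v j t ≠ 0) (i : ι) :
    ∃ t ∈ s, v i t ≠ 0 := by
  by_contra! hi
  obtain ⟨t₀, ht₀⟩ := hs
  have hpt : ∀ l, ∃ t ∈ s, l ≠ i → v l t ≠ 0 := fun l =>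
    if hl : l = i then ⟨t₀, ht₀, fun h => (h hl).elim⟩
    else (hv i l (Ne.symm hl) hi).imp fun _ ⟨ht, hvt⟩ => ⟨ht, fun _ => hvt⟩
  choose p hp hpv using hpt
  have := H _ (update_mem_of_forall_mem hp i ht₀)
  rw [allenSum_update_apply, hi t₀ ht₀, zero_mul, add_zero] at this
  exact mul_ne_zero (pow_ne_zero 2 (hu i t₀ ht₀))
    (prod_ne_zero_iff.2 fun l hl => hpv l (ne_of_mem_erase hl)) this

/-- Varying only the `j`-th coordinate, `allenSum` is affine in `(u j t ^ 2, v j t)`, and the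
coefficient of `u j t ^ 2` is nonzero at a point where no `v l` vanishes. -/
lemma exists_sq_eq_mul_of_allenSum_eq_zero (hu : ∀ k, ∀ t ∈ s, u k t ≠ 0)
    (H : ∀ x : ι → α, (∀ k, x k ∈ s) → allenSum (fun k => u k (x k)) (fun k => v k (x k)) = 0)
    (hv : ∀ i, ∃ t ∈ s, v i t ≠ 0) :
    ∃ c : ι → K, (∀ k, c k ≠ 0) ∧ ∑ k, c k = 0 ∧ ∀ k, ∀ t ∈ s, u k t ^ 2 = c k * v k t := by
  choose p hp hpv using hv
  have hprod : ∀ j, ∏ l ∈ univ.erase j, v l (p l) ≠ 0 := fun j =>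
    prod_ne_zero_iff.2 fun l _ => hpv l
  set c : ι → K := fun j => -(∑ k ∈ univ.erase j,
    u k (p k) ^ 2 * ∏ l ∈ (univ.erase k).erase j, v l (p l)) / ∏ l ∈ univ.erase j, v l (p l)
  have huv : ∀ j, ∀ t ∈ s, u j t ^ 2 = c j * v j t := by
    intro j t ht
    have := H _ (update_mem_of_forall_mem hp j ht)
    rw [allenSum_update_apply] at this
    simp only [c]
    field_simp [hprod j]
    linear_combination this
  refine ⟨c, fun k hk => ?_, ?_, huv⟩
  · have := huv k (p k) (hp k)
    rw [hk, zero_mul] at this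
    exact hu k _ (hp k) (pow_eq_zero_iff two_ne_zero |>.1 this)
  · have := H p hp
    rw [allenSum_eq_of_sq_eq_mul fun k => huv k _ (hp k)] at this
    exact (mul_eq_zero.1 this).resolve_right (prod_ne_zero_iff.2 fun l _ => hpv l)

theorem allenSum_eq_zero_iff (hs : s.Nonempty) (hu : ∀ k, ∀ t ∈ s, u k t ≠ 0) :
    (∀ x : ι → α, (∀ k, x k ∈ s) → allenSum (fun k => u k (x k)) (fun k => v k (x k)) = 0) ↔
      (∃ i j, i ≠ j ∧ (∀ t ∈ s, v i t = 0) ∧ ∀ t ∈ s, v j t = 0) ∨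
        ∃ c : ι → K, (∀ k, c k ≠ 0) ∧ ∑ k, c k = 0 ∧
          ∀ k, ∀ t ∈ s, u k t ^ 2 = c k * v k t := by
  constructor
  · intro H
    by_cases hA : ∃ i j, i ≠ j ∧ (∀ t ∈ s, v i t = 0) ∧ ∀ t ∈ s, v j t = 0
    · exact Or.inl hA
    push Not at hA
    exact Or.inr (exists_sq_eq_mul_of_allenSum_eq_zero hu H
      (exists_ne_zero_of_allenSum_eq_zero hs hu H hA))
  · rintro (⟨i, j, hij, hi, hj⟩ | ⟨c, -, hc, huv⟩) x hx
    · exact allenSum_eq_zero_of_eq_zero hij (hi _ (hx i)) (hj _ (hx j))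
    · rw [allenSum_eq_of_sq_eq_mul fun k => huv k _ (hx k), hc, zero_mul]

lemma exists_eq_mul_of_prod_eq_mul_prod {h φ : ι → α → K} {p : ι → α} (hp : ∀ k, p k ∈ s)
    (hh : ∀ k, ∀ t ∈ s, h k t ≠ 0) {γ : K}
    (H : ∀ x : ι → α, (∀ k, x k ∈ s) → ∏ k, h k (x k) = γ * ∏ k, φ k (x k)) (k : ι) :
    ∃ D, ∀ t ∈ s, h k t = D * φ k t := by
  have hprod : ∏ l ∈ univ.erase k, h l (p l) ≠ 0 := prod_ne_zero_iff.2 fun l _ => hh l _ (hp l)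
  refine ⟨γ * (∏ l ∈ univ.erase k, φ l (p l)) / ∏ l ∈ univ.erase k, h l (p l), fun t ht => ?_⟩
  have := H _ (update_mem_of_forall_mem hp k ht)
  simp only [Function.apply_update (fun l => h l), Function.apply_update (fun l => φ l),
    prod_update_of_mem (mem_univ k), sdiff_singleton_eq_erase] at this
  field_simp
  linear_combination this

end Field

end AllenSum

lemma logDeriv_exp_const_mul (α t : ℝ) : logDeriv (fun t => exp (α * t)) t = α := by
  have hd : HasDerivAt (fun t => exp (α * t)) (exp (α * t) * α) t := by
    simpa using ((hasDerivAt_id t).const_mul α).exp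
  rw [logDeriv_apply, hd.deriv]
  field_simp

lemma exists_mul_eq_exp_iff {u v : ℝ → ℝ} {s : Set ℝ} {t₀ : ℝ} (ht₀ : t₀ ∈ s)
    (hu : ∀ t ∈ s, u t ≠ 0) (hv : ∀ t ∈ s, v t ≠ 0) :
    (∃ γ a b, γ ≠ 0 ∧ a ≠ 0 ∧ b ≠ 0 ∧ ∀ t ∈ s, ∀ r ∈ s, u t * v r = γ * exp (a * t + b * r)) ↔
      (∃ C a, C ≠ 0 ∧ a ≠ 0 ∧ ∀ t ∈ s, u t = C * exp (a * t)) ∧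
        ∃ C b, C ≠ 0 ∧ b ≠ 0 ∧ ∀ r ∈ s, v r = C * exp (b * r) := by
  constructor
  · rintro ⟨γ, a, b, hγ, ha, hb, H⟩
    refine ⟨⟨γ * exp (b * t₀) / v t₀, a, by simp [hγ, hv t₀ ht₀], ha, fun t ht => ?_⟩,
      ⟨γ * exp (a * t₀) / u t₀, b, by simp [hγ, hu t₀ ht₀], hb, fun r hr => ?_⟩⟩
    · field_simp [hv t₀ ht₀]
      rw [H t ht t₀ ht₀, exp_add]
      ring
    · field_simp [hu t₀ ht₀]
      rw [mul_comm, H t₀ ht₀ r hr, exp_add]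
      ring
  · rintro ⟨⟨C, a, hC, ha, hu'⟩, ⟨C', b, hC', hb, hv'⟩⟩
    refine ⟨C * C', a, b, mul_ne_zero hC hC', ha, hb, fun t ht r hr => ?_⟩
    rw [hu' t ht, hv' r hr, exp_add]
    ring

lemma logDeriv_add_const_rpow (β a : ℝ) {t : ℝ} (ht : 0 < t + β) :
    logDeriv (fun t => (t + β) ^ a) t = a / (t + β) := by
  have hd : HasDerivAt (fun t => (t + β) ^ a) (a * (t + β) ^ (a - 1)) t := by
    simpa using ((hasDerivAt_id t).add_const β).rpow_const (p := a) (Or.inl ht.ne')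
  rw [logDeriv_apply, hd.deriv, rpow_sub_one ht.ne']
  field_simp [(rpow_pos_of_pos ht a).ne']

theorem deriv_logDeriv_eq_zero_iff {h : ℝ → ℝ} {s : Set ℝ} (hs : IsOpen s) (hs' : IsPreconnected s)
    (hsn : s.Nonempty) (hd : DifferentiableOn ℝ h s) (hld : DifferentiableOn ℝ (logDeriv h) s)
    (hne : ∀ t ∈ s, h t ≠ 0) (hde : ∀ t ∈ s, deriv h t ≠ 0) :
    (∀ t ∈ s, deriv (logDeriv h) t = 0) ↔
      ∃ C α, C ≠ 0 ∧ α ≠ 0 ∧ ∀ t ∈ s, h t = C * exp (α * t) := by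
  have hiff := fun α => logDeriv_eqOn_iff (g := fun t => exp (α * t)) hd (by fun_prop) hs hs'
    (fun t _ => exp_ne_zero _) hne
  constructor
  · intro H
    obtain ⟨α, hα⟩ := hs.exists_is_const_of_deriv_eq_zero hs' hld H
    obtain ⟨C, hC, hhC⟩ := (hiff α).1 fun t ht => by rw [hα t ht, logDeriv_exp_const_mul]
    obtain ⟨t₀, ht₀⟩ := hsn
    refine ⟨C, α, hC, ?_, fun t ht => hhC ht⟩
    rw [← hα t₀ ht₀]
    exact div_ne_zero (hde t₀ ht₀) (hne t₀ ht₀)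
  · rintro ⟨C, α, hC, -, hh⟩ t ht
    have hconst : EqOn (logDeriv h) (fun _ => α) s :=
      ((hiff α).2 ⟨C, hC, hh⟩).trans fun t _ => logDeriv_exp_const_mul α t
    rw [hconst.deriv hs ht, deriv_const]

lemma exists_eq_neg_div_add_of_sq_eq_mul_deriv {g : ℝ → ℝ} {s : Set ℝ} (hs : IsOpen s)
    (hs' : IsPreconnected s) (hd : DifferentiableOn ℝ g s) (hne : ∀ t ∈ s, g t ≠ 0) {c : ℝ}
    (hc : c ≠ 0) (hg : ∀ t ∈ s, g t ^ 2 = c * deriv g t) :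
    ∃ β, ∀ t ∈ s, g t = -c / (t + β) := by
  -- `(g⁻¹)' = -g' / g ^ 2 = -1 / c`, so `g⁻¹` is affine.
  have hderiv : EqOn (deriv fun t => (g t)⁻¹) (deriv fun t => -t / c) s := by
    intro t ht
    rw [deriv_fun_inv'' (hd.differentiableAt (hs.mem_nhds ht)) (hne t ht), deriv_div_const,
      deriv_neg, div_eq_div_iff (pow_ne_zero 2 (hne t ht)) hc, hg t ht]
    ring
  obtain ⟨a, ha⟩ := hs.exists_eq_add_of_deriv_eq hs' (hd.inv hne) (by fun_prop) hderiv
  refine ⟨-(c * a), fun t ht => ?_⟩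
  have hinv : (g t)⁻¹ = -(t + -(c * a)) / c := by
    rw [← Pi.inv_apply, ha ht]
    field_simp
    ring
  rw [← inv_inv (g t), hinv, inv_div, div_neg, neg_div]

lemma eqOn_logDeriv_iff_eq_mul_add_const_rpow {h : ℝ → ℝ} (hd : DifferentiableOn ℝ h (Ioi 0))
    (hne : ∀ t ∈ Ioi (0 : ℝ), h t ≠ 0) {β : ℝ} (hβ : 0 ≤ β) (a : ℝ) :
    EqOn (logDeriv h) (fun t => a / (t + β)) (Ioi 0) ↔
      ∃ D, D ≠ 0 ∧ ∀ t ∈ Ioi (0 : ℝ), h t = D * (t + β) ^ a := by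
  have hpos : ∀ t ∈ Ioi (0 : ℝ), 0 < t + β := fun t (ht : 0 < t) => by linarith
  have hlog : EqOn (logDeriv fun t => (t + β) ^ a) (fun t => a / (t + β)) (Ioi 0) :=
    fun t ht => logDeriv_add_const_rpow β a (hpos t ht)
  have hiff := logDeriv_eqOn_iff (g := fun t => (t + β) ^ a) hd
    (fun t ht => ((differentiableAt_id.add_const β).rpow_const
      (Or.inl (hpos t ht).ne')).differentiableWithinAt) isOpen_Ioi isPreconnected_Ioi
    (fun t ht => (rpow_pos_of_pos (hpos t ht) a).ne') hne
  exact ⟨fun H => hiff.1 (H.trans hlog.symm), fun H => (hiff.2 H).trans hlog⟩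

theorem sq_logDeriv_eq_mul_deriv_iff {h : ℝ → ℝ} (hd : DifferentiableOn ℝ h (Ioi 0))
    (hld : DifferentiableOn ℝ (logDeriv h) (Ioi 0)) (hne : ∀ t ∈ Ioi (0 : ℝ), h t ≠ 0)
    (hde : ∀ t ∈ Ioi (0 : ℝ), deriv h t ≠ 0) {c : ℝ} (hc : c ≠ 0) :
    (∀ t ∈ Ioi (0 : ℝ), logDeriv h t ^ 2 = c * deriv (logDeriv h) t) ↔
      ∃ D β : ℝ, ∀ t ∈ Ioi (0 : ℝ), h t = D * (t + β) ^ (-c) := by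
  constructor
  · intro H
    obtain ⟨β, hβ⟩ := exists_eq_neg_div_add_of_sq_eq_mul_deriv isOpen_Ioi isPreconnected_Ioi hld
      (fun t ht => div_ne_zero (hde t ht) (hne t ht)) hc H
    have hβ0 : 0 ≤ β := by
      by_contra! hneg
      have hmem : -β ∈ Ioi (0 : ℝ) := neg_pos.2 hneg
      have := hβ (-β) hmem
      rw [neg_add_cancel, div_zero] at this
      exact div_ne_zero (hde _ hmem) (hne _ hmem) this
    obtain ⟨D, -, hD⟩ := (eqOn_logDeriv_iff_eq_mul_add_const_rpow hd hne hβ0 (-c)).1 hβ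
    exact ⟨D, β, hD⟩
  · rintro ⟨D, β, hh⟩
    have hβ0 : 0 ≤ β := by
      by_contra! hneg
      have hmem : -β ∈ Ioi (0 : ℝ) := neg_pos.2 hneg
      have := hh (-β) hmem
      rw [neg_add_cancel, zero_rpow (neg_ne_zero.2 hc), mul_zero] at this
      exact hne _ hmem this
    have hD : D ≠ 0 := by
      rintro rfl
      exact hne 1 (Set.mem_Ioi.2 one_pos) (by simpa using hh 1 (Set.mem_Ioi.2 one_pos))
    have hlog := (eqOn_logDeriv_iff_eq_mul_add_const_rpow hd hne hβ0 (-c)).2 ⟨D, hD, hh⟩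
    intro t (ht : 0 < t)
    have htβ : t + β ≠ 0 := by positivity
    have hderiv : HasDerivAt (fun t => -c / (t + β)) (c / (t + β) ^ 2) t := by
      simpa using (hasDerivAt_const t (-c)).fun_div ((hasDerivAt_id' t).add_const β) htβ
    rw [hlog ht, hlog.deriv isOpen_Ioi ht, hderiv.deriv]
    field_simp

theorem exists_sq_logDeriv_eq_mul_iff {ι : Type*} [Fintype ι] [DecidableEq ι] {h : ι → ℝ → ℝ}
    (hh : ∀ i, DifferentiableOn ℝ (h i) (Ioi 0))
    (hlh : ∀ i, DifferentiableOn ℝ (logDeriv (h i)) (Ioi 0))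
    (hne : ∀ i, ∀ t > (0 : ℝ), h i t ≠ 0) (hde : ∀ i, ∀ t > (0 : ℝ), deriv (h i) t ≠ 0) :
    (∃ c : ι → ℝ, (∀ k, c k ≠ 0) ∧ ∑ k, c k = 0 ∧
        ∀ k, ∀ t ∈ Ioi (0 : ℝ), logDeriv (h k) t ^ 2 = c k * deriv (logDeriv (h k)) t) ↔
      ∃ γ : ℝ, γ ≠ 0 ∧ ∃ α β : ι → ℝ, (∀ i, α i ≠ 0) ∧ ∑ i, α i = 0 ∧
        ∀ x : ι → ℝ, (∀ i, 0 < x i) → ∏ i, h i (x i) = γ * ∏ i, (x i + β i) ^ α i := by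
  have hpow := fun k {c : ℝ} (hc : c ≠ 0) =>
    sq_logDeriv_eq_mul_deriv_iff (hh k) (hlh k) (hne k) (hde k) hc
  constructor
  · rintro ⟨c, hc0, hcs, hc⟩
    choose D β hDβ using fun k => (hpow k (hc0 k)).1 (hc k)
    refine ⟨∏ k, D k, prod_ne_zero_iff.2 fun k _ hD => ?_, fun k => -c k, β,
      fun k => neg_ne_zero.2 (hc0 k), by simp [hcs], fun x hx => ?_⟩
    · exact hne k 1 one_pos (by simpa [hD] using hDβ k 1 (Set.mem_Ioi.2 one_pos))
    · rw [← prod_mul_distrib]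
      exact prod_congr rfl fun k _ => by simpa using hDβ k _ (hx k)
  · rintro ⟨γ, -, α, β, hα0, hαs, hprod⟩
    refine ⟨fun k => -α k, fun k => neg_ne_zero.2 (hα0 k), by simp [hαs], fun k => ?_⟩
    obtain ⟨D, hD⟩ := exists_eq_mul_of_prod_eq_mul_prod (s := Ioi 0) (p := fun _ => 1)
      (φ := fun k t => (t + β k) ^ α k) (fun _ => Set.mem_Ioi.2 one_pos) hne hprod k
    exact (hpow k (neg_ne_zero.2 (hα0 k))).2 ⟨D, β k, by simpa using hD⟩

lemma hasDerivAt_prod_update {ι : Type*} [Fintype ι] [DecidableEq ι] {h : ι → ℝ → ℝ}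
    (y : ι → ℝ) (i : ι) (hd : DifferentiableAt ℝ (h i) (y i)) (hne : h i (y i) ≠ 0) :
    HasDerivAt (fun t => ∏ k, h k (Function.update y i t k))
      (logDeriv (h i) (y i) * ∏ k, h k (y k)) (y i) := by
  have hsplit : ∀ t, ∏ k, h k (Function.update y i t k) = h i t * ∏ k ∈ univ.erase i, h k (y k) :=
    fun t => by
      simp only [Function.apply_update (fun k => h k), prod_update_of_mem (mem_univ i),
        sdiff_singleton_eq_erase]
  simp only [hsplit]
  refine (hd.hasDerivAt.mul_const _).congr_deriv ?_
  rw [logDeriv_apply, ← mul_prod_erase _ _ (mem_univ i)]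
  field_simp

section ProductComposition

variable {n : ℕ} {F : ℝ → ℝ} {h : Fin n → ℝ → ℝ} {f : (Fin n → ℝ) → ℝ}

lemma eventually_update_pos {y : Fin n → ℝ} (hy : ∀ k, 0 < y k) (i : Fin n) :
    ∀ᶠ t in 𝓝 (y i), ∀ k, 0 < Function.update y i t k :=
  Filter.eventually_of_mem (Ioi_mem_nhds (hy i)) fun _ ht => update_mem_of_forall_mem hy i ht

lemma pderiv'_eq_of_eq_comp_prod (hF : Differentiable ℝ F)
    (hh : ∀ i, DifferentiableOn ℝ (h i) (Ioi 0)) (hne : ∀ i, ∀ t > (0 : ℝ), h i t ≠ 0)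
    (hf : ∀ x : Fin n → ℝ, (∀ i, 0 < x i) → f x = F (∏ i, h i (x i)))
    {y : Fin n → ℝ} (hy : ∀ k, 0 < y k) (i : Fin n) :
    pderiv' f i y = deriv F (∏ k, h k (y k)) * (∏ k, h k (y k)) * logDeriv (h i) (y i) := by
  have hline : (fun t => f (Function.update y i t)) =ᶠ[𝓝 (y i)]
      fun t => F (∏ k, h k (Function.update y i t k)) :=
    (eventually_update_pos hy i).mono fun t ht => hf _ ht
  have hd : HasDerivAt (fun t => F (∏ k, h k (Function.update y i t k))) _ (y i) :=
    (hF (∏ k, h k (y k))).hasDerivAt.comp_of_eq (y i) (hasDerivAt_prod_update y i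
      ((hh i).differentiableAt (Ioi_mem_nhds (hy i))) (hne i _ (hy i))) (by simp)
  rw [pderiv', hline.deriv_eq, hd.deriv]
  ring

lemma pderiv'_pderiv'_eq_of_eq_comp_prod (hF1 : Differentiable ℝ F)
    (hF2 : Differentiable ℝ (deriv F)) (hh : ∀ i, DifferentiableOn ℝ (h i) (Ioi 0))
    (hlh : ∀ i, DifferentiableOn ℝ (logDeriv (h i)) (Ioi 0))
    (hne : ∀ i, ∀ t > (0 : ℝ), h i t ≠ 0)
    (hf : ∀ x : Fin n → ℝ, (∀ i, 0 < x i) → f x = F (∏ i, h i (x i)))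
    {y : Fin n → ℝ} (hy : ∀ k, 0 < y k) (i j : Fin n) :
    pderiv' (pderiv' f j) i y =
      deriv (fun u => deriv F u * u) (∏ k, h k (y k)) * (∏ k, h k (y k)) *
          logDeriv (h i) (y i) * logDeriv (h j) (y j) +
        if i = j then deriv F (∏ k, h k (y k)) * (∏ k, h k (y k)) *
          deriv (logDeriv (h i)) (y i) else 0 := by
  set Φ : ℝ → ℝ := fun u => deriv F u * u
  have hline : (fun t => pderiv' f j (Function.update y i t)) =ᶠ[𝓝 (y i)]
      fun t => Φ (∏ k, h k (Function.update y i t k)) * logDeriv (h j) (Function.update y i t j) :=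
    (eventually_update_pos hy i).mono fun t ht => pderiv'_eq_of_eq_comp_prod hF1 hh hne hf ht j
  have hΦ : HasDerivAt Φ (deriv Φ (∏ k, h k (y k))) (∏ k, h k (y k)) :=
    ((hF2 _).mul differentiableAt_id).hasDerivAt
  have hP := hasDerivAt_prod_update y i ((hh i).differentiableAt (Ioi_mem_nhds (hy i)))
    (hne i _ (hy i))
  have hg : HasDerivAt (fun t => logDeriv (h j) (Function.update y i t j))
      (if i = j then deriv (logDeriv (h i)) (y i) else 0) (y i) := by
    by_cases hij : i = j
    · subst hij
      simpa using ((hlh i).differentiableAt (Ioi_mem_nhds (hy i))).hasDerivAt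
    · simpa [Function.update_of_ne (Ne.symm hij), hij] using
        hasDerivAt_const (y i) (logDeriv (h j) (y j))
  have hd : HasDerivAt (fun t => Φ (∏ k, h k (Function.update y i t k)) *
      logDeriv (h j) (Function.update y i t j)) _ (y i) := (hΦ.comp_of_eq (y i) hP (by simp)).mul hg
  rw [pderiv', hline.deriv_eq, hd.deriv]
  simp only [Function.comp_apply, Function.update_eq_self, Φ]
  split_ifs <;> ring

lemma borderedHessian_eq_bordered (x : Fin n → ℝ) :
    borderedHessian f x =
      Matrix.bordered (fun j => pderiv' f j x) (Matrix.of fun i j => pderiv' (pderiv' f j) i x) :=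
  rfl

theorem det_borderedHessian_eq_of_eq_comp_prod (hF1 : Differentiable ℝ F)
    (hF2 : Differentiable ℝ (deriv F)) (hF' : ∀ u, deriv F u ≠ 0)
    (hh : ∀ i, DifferentiableOn ℝ (h i) (Ioi 0))
    (hlh : ∀ i, DifferentiableOn ℝ (logDeriv (h i)) (Ioi 0))
    (hne : ∀ i, ∀ t > (0 : ℝ), h i t ≠ 0)
    (hf : ∀ x : Fin n → ℝ, (∀ i, 0 < x i) → f x = F (∏ i, h i (x i)))
    {y : Fin n → ℝ} (hy : ∀ k, 0 < y k) :
    (borderedHessian f y).det = -(deriv F (∏ k, h k (y k)) * ∏ k, h k (y k)) ^ (n + 1) *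
      allenSum (fun k => logDeriv (h k) (y k)) (fun k => deriv (logDeriv (h k)) (y k)) := by
  set P := ∏ k, h k (y k)
  set lam := deriv F P * P
  set g : Fin n → ℝ := fun k => logDeriv (h k) (y k)
  have hlam : lam ≠ 0 := mul_ne_zero (hF' P) (prod_ne_zero_iff.2 fun k _ => hne k _ (hy k))
  have hmat : borderedHessian f y = Matrix.bordered (lam • g)
      (lam • Matrix.diagonal (fun k => deriv (logDeriv (h k)) (y k)) +
        Matrix.vecMulVec ((deriv (fun u => deriv F u * u) P * P / lam) • g) (lam • g)) := by
    rw [borderedHessian_eq_bordered]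
    congr 1
    · funext j
      rw [pderiv'_eq_of_eq_comp_prod hF1 hh hne hf hy j]
      rfl
    · ext i j
      rw [Matrix.of_apply, pderiv'_pderiv'_eq_of_eq_comp_prod hF1 hF2 hh hlh hne hf hy i j]
      simp only [Matrix.add_apply, Matrix.smul_apply, Matrix.diagonal_apply,
        Matrix.vecMulVec_apply, Pi.smul_apply, smul_eq_mul, g]
      field_simp
      split_ifs with hij
      · subst hij; ring
      · ring
  rw [hmat, Matrix.det_bordered_add_vecMulVec, Matrix.bordered_smul, Matrix.det_smul,
    Matrix.det_bordered_diagonal, Fintype.card_fin]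
  ring

end ProductComposition

/-- Theorem 4.1: for `f = F(h₁(x₁)⋯hₙ(xₙ))` with `F' ≠ 0` and thrice
differentiable nonvanishing inner functions with nonvanishing first
derivatives, the Allen matrix of `f` is singular at every point of `ℝ₊ⁿ` iff
(a) two of the inner factors combine to an exponential
`γ e^{α₁ t + α₂ s}`, or (b) `h₁(x₁)⋯hₙ(xₙ) = γ (x₁+β₁)^{α₁}⋯(xₙ+βₙ)^{αₙ}`
with nonzero `αᵢ` summing to `0`. -/
theorem stmt_7 (n : ℕ) (F : ℝ → ℝ)
    (hF1 : Differentiable ℝ F) (hF2 : Differentiable ℝ (deriv F))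
    (hF' : ∀ u, deriv F u ≠ 0)
    (h : Fin n → ℝ → ℝ)
    (hsm : ∀ i, ContDiffOn ℝ 3 (h i) (Set.Ioi 0))
    (hne : ∀ i, ∀ t > (0 : ℝ), h i t ≠ 0)
    (hde : ∀ i, ∀ t > (0 : ℝ), deriv (h i) t ≠ 0)
    (f : (Fin n → ℝ) → ℝ)
    (hf : ∀ x : Fin n → ℝ, (∀ i, 0 < x i) → f x = F (∏ i, h i (x i))) :
    (∀ x : Fin n → ℝ, (∀ i, 0 < x i) → (borderedHessian f x).det = 0) ↔
      ((∃ i j : Fin n, i ≠ j ∧ ∃ γ αi αj : ℝ, γ ≠ 0 ∧ αi ≠ 0 ∧ αj ≠ 0 ∧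
          ∀ t > (0 : ℝ), ∀ s > (0 : ℝ),
            h i t * h j s = γ * Real.exp (αi * t + αj * s)) ∨
        (∃ γ : ℝ, γ ≠ 0 ∧ ∃ α β : Fin n → ℝ,
          (∀ i, α i ≠ 0) ∧ (∑ i, α i) = 0 ∧
          ∀ x : Fin n → ℝ, (∀ i, 0 < x i) →
            (∏ i, h i (x i)) = γ * ∏ i, (x i + β i) ^ (α i))) := by
  have hh : ∀ i, DifferentiableOn ℝ (h i) (Ioi 0) := fun i =>
    (hsm i).differentiableOn (by norm_num)
  have hlh : ∀ i, DifferentiableOn ℝ (logDeriv (h i)) (Ioi 0) := fun i =>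
    (((hsm i).deriv_of_isOpen (m := 2) isOpen_Ioi (by norm_num)).differentiableOn
      (by norm_num)).div (hh i) (hne i)
  have hdet : ∀ x : Fin n → ℝ, (∀ i, 0 < x i) → ((borderedHessian f x).det = 0 ↔
      allenSum (fun k => logDeriv (h k) (x k)) (fun k => deriv (logDeriv (h k)) (x k)) = 0) :=
    fun x hx => by
      rw [det_borderedHessian_eq_of_eq_comp_prod hF1 hF2 hF' hh hlh hne hf hx, neg_mul,
        neg_eq_zero, mul_eq_zero, or_iff_right (pow_ne_zero _ (mul_ne_zero (hF' _)
          (prod_ne_zero_iff.2 fun i _ => hne i _ (hx i))))]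
  refine (forall₂_congr hdet).trans <| (allenSum_eq_zero_iff (s := Ioi 0) nonempty_Ioi
    fun k t ht => div_ne_zero (hde k t ht) (hne k t ht)).trans <|
      or_congr (exists₂_congr fun i j => and_congr_right fun _ => ?_)
        (exists_sq_logDeriv_eq_mul_iff hh hlh hne hde)
  have hexp := fun k => deriv_logDeriv_eq_zero_iff isOpen_Ioi isPreconnected_Ioi nonempty_Ioi
    (hh k) (hlh k) (hne k) (hde k)
  exact (and_congr (hexp i) (hexp j)).trans
    (exists_mul_eq_exp_iff (s := Ioi 0) (Set.mem_Ioi.2 one_pos) (hne i) (hne j)).symm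
end

section
/- Let h : ℝ₊ → ℝ be a twice differentiable nonvanishing function with nonvanishing first derivative satisfying (h''·h)/(h')² + h/(x·h') = 1 for all x > 0 (the case σ = 1, ζ = 1 of equation (5.5)). Then there exist a nonzero constant γ and a nonzero constant α such that h(x) = γ x^{α} for all x > 0. -/
/-!
Multiplied by `x h'² / h²`, the equation says that the elasticity `x h'/h = x · logDeriv h` has
derivative `(h' h + x h'' h - x h'²) / h² = 0`, so it is a constant `α` on the connected set
`ℝ₊`; then `h` and `x ↦ x ^ α` have the same logarithmic derivative, hence are proportional.
Finally `α ≠ 0` because `h'` does not vanish.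
-/

open Real Set

lemma logDeriv_rpow_const {x : ℝ} (hx : 0 < x) (α : ℝ) :
    logDeriv (fun y : ℝ => y ^ α) x = α / x := by
  rw [logDeriv_apply, (hasDerivAt_rpow_const (Or.inl hx.ne')).deriv, rpow_sub_one hx.ne']
  field_simp [(rpow_pos_of_pos hx α).ne']

lemma exists_const_mul_rpow_of_mul_logDeriv_eq {f : ℝ → ℝ} {α : ℝ}
    (hf : DifferentiableOn ℝ f (Ioi 0)) (hf0 : ∀ x ∈ Ioi (0 : ℝ), f x ≠ 0)
    (hα : ∀ x ∈ Ioi (0 : ℝ), x * logDeriv f x = α) :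
    ∃ c : ℝ, c ≠ 0 ∧ ∀ x ∈ Ioi (0 : ℝ), f x = c * x ^ α := by
  have hpow : DifferentiableOn ℝ (fun y : ℝ => y ^ α) (Ioi 0) := fun x hx =>
    (differentiableAt_rpow_const_of_ne α (ne_of_gt hx)).differentiableWithinAt
  have hlog : EqOn (logDeriv f) (logDeriv fun y : ℝ => y ^ α) (Ioi 0) := fun x (hx : 0 < x) => by
    rw [logDeriv_rpow_const hx, eq_div_iff hx.ne', mul_comm, hα x hx]
  obtain ⟨c, hc, hfc⟩ := (logDeriv_eqOn_iff hf hpow isOpen_Ioi isPreconnected_Ioi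
    (fun x (hx : 0 < x) => (rpow_pos_of_pos hx α).ne') hf0).1 hlog
  exact ⟨c, hc, fun x hx => hfc hx⟩

section Elasticity

variable {f : ℝ → ℝ} {x : ℝ}

lemma differentiableAt_mul_logDeriv (hf : DifferentiableAt ℝ f x)
    (hf' : DifferentiableAt ℝ (deriv f) x) (hfx : f x ≠ 0) :
    DifferentiableAt ℝ (fun y => y * logDeriv f y) x := by
  simpa only [logDeriv_apply] using differentiableAt_fun_id.fun_mul (hf'.fun_div hf hfx)

lemma deriv_mul_logDeriv (hf : DifferentiableAt ℝ f x)
    (hf' : DifferentiableAt ℝ (deriv f) x) (hfx : f x ≠ 0) :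
    deriv (fun y => y * logDeriv f y) x =
      (deriv f x * f x + x * deriv (deriv f) x * f x - x * deriv f x ^ 2) / f x ^ 2 := by
  simp only [logDeriv_apply]
  rw [deriv_fun_mul differentiableAt_fun_id (hf'.fun_div hf hfx), deriv_fun_div hf' hf hfx,
    deriv_id'']
  field_simp
  ring

end Elasticity

/-- Equation (5.5) with `σ = 1`, `ζ = 1`: a twice differentiable nonvanishing
function `h` on `ℝ₊` with nonvanishing first derivative satisfying
`(h'' h)/(h')² + h/(x h') = 1` for all `x > 0` is of the form
`h(x) = γ x^α` with nonzero constants `γ, α`. -/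
theorem stmt_15 (h : ℝ → ℝ)
    (hd1 : ∀ x > (0 : ℝ), DifferentiableAt ℝ h x)
    (hd2 : ∀ x > (0 : ℝ), DifferentiableAt ℝ (deriv h) x)
    (hne : ∀ x > (0 : ℝ), h x ≠ 0)
    (hde : ∀ x > (0 : ℝ), deriv h x ≠ 0)
    (heq : ∀ x > (0 : ℝ),
      deriv (deriv h) x * h x / (deriv h x) ^ 2 + h x / (x * deriv h x) = 1) :
    ∃ γ : ℝ, γ ≠ 0 ∧ ∃ α : ℝ, α ≠ 0 ∧ ∀ x > (0 : ℝ), h x = γ * x ^ α := by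
  have hdiff : DifferentiableOn ℝ (fun y => y * logDeriv h y) (Ioi 0) := fun x (hx : 0 < x) =>
    (differentiableAt_mul_logDeriv (hd1 x hx) (hd2 x hx) (hne x hx)).differentiableWithinAt
  have hzero : EqOn (deriv fun y => y * logDeriv h y) 0 (Ioi 0) := fun x (hx : 0 < x) => by
    have hhx := hne x hx
    have hdx := hde x hx
    have e := heq x hx
    field_simp at e
    rw [deriv_mul_logDeriv (hd1 x hx) (hd2 x hx) hhx, Pi.zero_apply, div_eq_zero_iff]
    exact Or.inl (by linear_combination e)
  obtain ⟨α, hα⟩ := isOpen_Ioi.exists_is_const_of_deriv_eq_zero isPreconnected_Ioi hdiff hzero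
  have hα0 : α ≠ 0 := by
    rw [← hα 1 (mem_Ioi.2 one_pos), one_mul, logDeriv_apply]
    exact div_ne_zero (hde 1 one_pos) (hne 1 one_pos)
  obtain ⟨γ, hγ, hγα⟩ := exists_const_mul_rpow_of_mul_logDeriv_eq
    (fun x hx => (hd1 x hx).differentiableWithinAt) hne hα
  exact ⟨γ, hγ, α, hα0, hγα⟩
end

section
/- Let ζ ≠ 1 be a constant and let h : J → ℝ be a twice differentiable nonvanishing function with nonvanishing first derivative on an open interval J ⊆ ℝ₊ satisfying (h''·h)/(h')² + h/(x·h') = ζ for all x ∈ J (the case σ = 1 of equation (5.5)). Then there exist a nonzero constant η and a constant κ such that h(x) = ( (1−ζ)κ + (1−ζ)η·ln x )^{1/(1−ζ)} for all x ∈ J where the base is positive. -/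
open Real Set

/-!
With `E(h) = h''h/h'² + h/(x h')`, one computes `(x h' h^{-ζ})' = x h'² h^{-ζ-1} (E(h) - ζ)`,
so `η := x h' h^{-ζ}` is a nonzero constant on the interval `J`; then `(h^{1-ζ})' = (1-ζ) η / x`
makes `h^{1-ζ}` affine in `log x`. This needs `h > 0` for the real power. Otherwise `h < 0` on `J`,
`-h` solves the same equation, and negating its constants gives a base that is negative on all
of `J`.
-/

theorem IsPreconnected.forall_lt_or_forall_lt_of_forall_ne {X α : Type*} [TopologicalSpace X]
    [LinearOrder α] [TopologicalSpace α] [OrderClosedTopology α] {s : Set X} {f : X → α} {a : α}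
    (hs : IsPreconnected s) (hf : ContinuousOn f s) (hne : ∀ x ∈ s, f x ≠ a) :
    (∀ x ∈ s, a < f x) ∨ ∀ x ∈ s, f x < a := by
  by_contra! ⟨⟨x, hx, hxa⟩, ⟨y, hy, hya⟩⟩
  obtain ⟨z, hz, hza⟩ := hs.intermediate_value hx hy hf ⟨hxa, hya⟩
  exact hne z hz hza

theorem hasDerivAt_mul_mul_rpow_neg {h h' : ℝ → ℝ} {h'' ζ x : ℝ} (hx : x ≠ 0)
    (hhx : h x ≠ 0) (hh'x : h' x ≠ 0) (hh : HasDerivAt h (h' x) x) (hh' : HasDerivAt h' h'' x) :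
    HasDerivAt (fun y => y * h' y * h y ^ (-ζ))
      (x * h' x ^ 2 * h x ^ (-ζ - 1) * (h'' * h x / h' x ^ 2 + h x / (x * h' x) - ζ)) x := by
  refine (((hasDerivAt_id x).mul hh').mul (hh.rpow_const (p := -ζ) (Or.inl hhx))).congr_deriv ?_
  simp only [Pi.mul_apply, id, rpow_sub_one hhx]
  field_simp
  ring

theorem exists_rpow_one_sub_eq_of_hicks {J : Set ℝ} (hJ : IsOpen J) (hJc : IsPreconnected J)
    (hJ0 : ∀ x ∈ J, x ≠ 0) {ζ : ℝ} (hζ : ζ ≠ 1) {h h' h'' : ℝ → ℝ}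
    (hh : ∀ x ∈ J, HasDerivAt h (h' x) x) (hh' : ∀ x ∈ J, HasDerivAt h' (h'' x) x)
    (hpos : ∀ x ∈ J, 0 < h x) (hne : ∀ x ∈ J, h' x ≠ 0)
    (heq : ∀ x ∈ J, h'' x * h x / h' x ^ 2 + h x / (x * h' x) = ζ) :
    ∃ η ≠ 0, ∃ κ, ∀ x ∈ J, h x ^ (1 - ζ) = (1 - ζ) * κ + (1 - ζ) * η * log x := by
  rcases J.eq_empty_or_nonempty with rfl | ⟨x₀, hx₀⟩
  · exact ⟨1, one_ne_zero, 0, by simp⟩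
  have hw : ∀ x ∈ J, HasDerivAt (fun y => y * h' y * h y ^ (-ζ)) 0 x := fun x hx => by
    simpa [heq x hx] using hasDerivAt_mul_mul_rpow_neg (ζ := ζ) (hJ0 x hx) (hpos x hx).ne'
      (hne x hx) (hh x hx) (hh' x hx)
  obtain ⟨η, hη⟩ := hJ.exists_is_const_of_deriv_eq_zero hJc
    (fun x hx => (hw x hx).differentiableAt.differentiableWithinAt)
    (fun x hx => (hw x hx).deriv)
  have hu : ∀ x ∈ J, HasDerivAt (fun y => h y ^ (1 - ζ)) ((1 - ζ) * η * x⁻¹) x := fun x hx => by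
    convert (hh x hx).rpow_const (p := 1 - ζ) (Or.inl (hpos x hx).ne') using 1
    rw [← hη x hx, show 1 - ζ - 1 = -ζ by ring]
    field_simp [hJ0 x hx]
  have hlog : ∀ x ∈ J, HasDerivAt (fun y => (1 - ζ) * η * log y) ((1 - ζ) * η * x⁻¹) x :=
    fun x hx => (hasDerivAt_log (hJ0 x hx)).const_mul _
  obtain ⟨a, ha⟩ := hJ.exists_eq_add_of_deriv_eq hJc
    (fun x hx => (hu x hx).differentiableAt.differentiableWithinAt)
    (fun x hx => (hlog x hx).differentiableAt.differentiableWithinAt)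
    (fun x hx => (hu x hx).deriv.trans (hlog x hx).deriv.symm)
  refine ⟨η, ?_, a / (1 - ζ), fun x hx => ?_⟩
  · rw [← hη x₀ hx₀]
    exact mul_ne_zero (mul_ne_zero (hJ0 x₀ hx₀) (hne x₀ hx₀))
      (rpow_pos_of_pos (hpos x₀ hx₀) _).ne'
  · rw [show h x ^ (1 - ζ) = _ from ha hx, mul_div_cancel₀ _ (sub_ne_zero.mpr hζ.symm)]
    ring

/-- Equation (5.5) with `σ = 1`, `ζ ≠ 1`: a twice differentiable nonvanishing
function `h` with nonvanishing first derivative on an open interval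
`J ⊆ ℝ₊` satisfying `(h'' h)/(h')² + h/(x h') = ζ` on `J` is of the form
`h(x) = ((1−ζ)κ + (1−ζ)η ln x)^{1/(1−ζ)}` wherever the base is positive. -/
theorem stmt_17 (ζ : ℝ) (hζ : ζ ≠ 1) (J : Set ℝ)
    (hJopen : IsOpen J) (hJconn : J.OrdConnected) (hJpos : J ⊆ Set.Ioi (0 : ℝ))
    (h : ℝ → ℝ)
    (hd1 : ∀ x ∈ J, DifferentiableAt ℝ h x)
    (hd2 : ∀ x ∈ J, DifferentiableAt ℝ (deriv h) x)
    (hne : ∀ x ∈ J, h x ≠ 0)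
    (hde : ∀ x ∈ J, deriv h x ≠ 0)
    (heq : ∀ x ∈ J,
      deriv (deriv h) x * h x / (deriv h x) ^ 2 + h x / (x * deriv h x) = ζ) :
    ∃ η : ℝ, η ≠ 0 ∧ ∃ κ : ℝ, ∀ x ∈ J,
      0 < (1 - ζ) * κ + (1 - ζ) * η * Real.log x →
        h x = ((1 - ζ) * κ + (1 - ζ) * η * Real.log x) ^ ((1 : ℝ) / (1 - ζ)) := by
  have hJc : IsPreconnected J := hJconn.isPreconnected
  have hJ0 : ∀ x ∈ J, x ≠ 0 := fun x hx => (hJpos hx).ne'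
  have hh : ∀ x ∈ J, HasDerivAt h (deriv h x) x := fun x hx => (hd1 x hx).hasDerivAt
  have hh' : ∀ x ∈ J, HasDerivAt (deriv h) (deriv (deriv h) x) x :=
    fun x hx => (hd2 x hx).hasDerivAt
  rcases hJc.forall_lt_or_forall_lt_of_forall_ne
    (fun x hx => (hd1 x hx).continuousAt.continuousWithinAt) hne with hpos | hneg
  · obtain ⟨η, hη, κ, hκ⟩ := exists_rpow_one_sub_eq_of_hicks hJopen hJc hJ0 hζ hh hh' hpos hde heq
    refine ⟨η, hη, κ, fun x hx _ => ?_⟩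
    rw [← hκ x hx, ← rpow_mul (hpos x hx).le, mul_one_div_cancel (sub_ne_zero.mpr hζ.symm),
      rpow_one]
  · obtain ⟨η, hη, κ, hκ⟩ := exists_rpow_one_sub_eq_of_hicks hJopen hJc hJ0 hζ
      (h := fun y => -h y) (h' := fun y => -deriv h y) (h'' := fun y => -deriv (deriv h) y)
      (fun x hx => (hh x hx).neg) (fun x hx => (hh' x hx).neg)
      (fun x hx => neg_pos.mpr (hneg x hx)) (fun x hx => neg_ne_zero.mpr (hde x hx))
      (fun x hx => by simpa [neg_div_neg_eq] using heq x hx)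
    refine ⟨-η, neg_ne_zero.mpr hη, -κ, fun x hx hbase => absurd hbase (not_lt.mpr ?_)⟩
    have := hκ x hx ▸ rpow_pos_of_pos (neg_pos.mpr (hneg x hx)) (1 - ζ)
    linarith
end

section
/- Let n ≥ 2, let σ be a nonzero constant with σ ≠ 1, let F : ℝ → ℝ₊ be twice differentiable with F' ≠ 0, let β₁,…,βₙ be nonzero constants, and define f(x₁,…,xₙ) = F( β₁ x₁^{(σ−1)/σ} + … + βₙ xₙ^{(σ−1)/σ} ) on ℝ₊ⁿ. Then for every x ∈ ℝ₊ⁿ at which the denominator in the definition of H_{ij} is nonzero and all 1 ≤ i ≠ j ≤ n, the Hicks elasticity of substitution satisfies H_{ij}(x) = σ; i.e. the homothetic generalized ACMS production function has constant Hicks elasticity of substitution equal to σ. -/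
open Real Finset

/-- The denominator in the definition of the Hicks elasticity of substitution. -/
noncomputable def hicksDenom {n : ℕ} (f : (Fin n → ℝ) → ℝ) (i j : Fin n)
    (x : Fin n → ℝ) : ℝ :=
  pderiv' (pderiv' f i) i x / (pderiv' f i x) ^ 2
    - 2 * pderiv' (pderiv' f j) i x / (pderiv' f i x * pderiv' f j x)
    + pderiv' (pderiv' f j) j x / (pderiv' f j x) ^ 2

/-- The Hicks elasticity of substitution of the `i`-th production variable
with respect to the `j`-th one. -/
noncomputable def hicks {n : ℕ} (f : (Fin n → ℝ) → ℝ) (i j : Fin n)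
    (x : Fin n → ℝ) : ℝ :=
  -(1 / (x i * pderiv' f i x) + 1 / (x j * pderiv' f j x)) / hicksDenom f i j x

/-!
For `f = F (∑ₘ gₘ (xₘ))` the chain rule gives `f_k = F' g_k'`, `f_ij = F'' g_i' g_j'` for `i ≠ j`
and `f_kk = F'' g_k'² + F' g_k''`. In the Hicks denominator the `F''` terms cancel, and `F'` then
cancels between numerator and denominator, leaving
`H_ij = -(1/(x_i g_i') + 1/(x_j g_j')) / (g_i''/g_i'² + g_j''/g_j'²)`.
For `gₘ t = βₘ t^ρ` one has `t gₘ'' = (ρ - 1) gₘ'`, so the denominator is `ρ - 1` times the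
bracket of the numerator and `H_ij = 1/(1 - ρ) = σ`.
-/

open Filter Topology Function

theorem pderiv'_eq_of_hasDerivAt {n : ℕ} {f : (Fin n → ℝ) → ℝ} {x : Fin n → ℝ} {i : Fin n}
    {φ : ℝ → ℝ} {d : ℝ} (hf : (fun t => f (update x i t)) =ᶠ[𝓝 (x i)] φ)
    (hφ : HasDerivAt φ d (x i)) : pderiv' f i x = d := by
  rw [pderiv', hf.deriv_eq, hφ.deriv]

theorem eventually_update_pos_s19 {n : ℕ} {x : Fin n → ℝ} (hx : ∀ m, 0 < x m) (i : Fin n) :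
    ∀ᶠ t in 𝓝 (x i), ∀ m, 0 < update x i t m := by
  filter_upwards [Ioi_mem_nhds (hx i)] with t ht m
  rcases eq_or_ne m i with rfl | hmi
  · simpa using ht
  · simpa [hmi] using hx m

theorem hasDerivAt_sum_apply_update {n : ℕ} {g : Fin n → ℝ → ℝ} {x : Fin n → ℝ} {i : Fin n}
    {d : ℝ} (hg : HasDerivAt (g i) d (x i)) :
    HasDerivAt (fun t => ∑ m, g m (update x i t m)) d (x i) := by
  have hsplit (t : ℝ) : ∑ m, g m (update x i t m) = g i t + ∑ m ∈ univ \ {i}, g m (x m) := by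
    simp only [apply_update (fun m => g m) x i t]
    exact sum_update_of_mem (mem_univ i) _ _
  simpa only [hsplit] using hg.add_const _

section CompSum

variable {n : ℕ} {F : ℝ → ℝ} {g g' g'' : Fin n → ℝ → ℝ} {f : (Fin n → ℝ) → ℝ}
  {x : Fin n → ℝ} {i j : Fin n}

theorem pderiv'_comp_sum (hF : Differentiable ℝ F)
    (hg : ∀ m, ∀ t, 0 < t → HasDerivAt (g m) (g' m t) t)
    (hf : ∀ x : Fin n → ℝ, (∀ m, 0 < x m) → f x = F (∑ m, g m (x m)))
    (hx : ∀ m, 0 < x m) (i : Fin n) :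
    pderiv' f i x = deriv F (∑ m, g m (x m)) * g' i (x i) := by
  have h := (hF _).hasDerivAt.comp (x i) (hasDerivAt_sum_apply_update (hg i _ (hx i)))
  rw [update_eq_self] at h
  refine pderiv'_eq_of_hasDerivAt ?_ h
  filter_upwards [eventually_update_pos_s19 hx i] with t ht using hf _ ht

theorem pderiv'_pderiv'_comp_sum_of_ne (hF : Differentiable ℝ F)
    (hF' : Differentiable ℝ (deriv F)) (hg : ∀ m, ∀ t, 0 < t → HasDerivAt (g m) (g' m t) t)
    (hf : ∀ x : Fin n → ℝ, (∀ m, 0 < x m) → f x = F (∑ m, g m (x m)))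
    (hx : ∀ m, 0 < x m) (hij : i ≠ j) :
    pderiv' (pderiv' f j) i x = deriv (deriv F) (∑ m, g m (x m)) * g' i (x i) * g' j (x j) := by
  have h := ((hF' _).hasDerivAt.comp (x i)
    (hasDerivAt_sum_apply_update (hg i _ (hx i)))).mul_const (g' j (x j))
  rw [update_eq_self] at h
  refine pderiv'_eq_of_hasDerivAt ?_ h
  filter_upwards [eventually_update_pos_s19 hx i] with t ht
  rw [pderiv'_comp_sum hF hg hf ht, update_of_ne hij.symm, comp_apply]

theorem pderiv'_pderiv'_comp_sum_self (hF : Differentiable ℝ F)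
    (hF' : Differentiable ℝ (deriv F)) (hg : ∀ m, ∀ t, 0 < t → HasDerivAt (g m) (g' m t) t)
    (hg' : ∀ m, ∀ t, 0 < t → HasDerivAt (g' m) (g'' m t) t)
    (hf : ∀ x : Fin n → ℝ, (∀ m, 0 < x m) → f x = F (∑ m, g m (x m)))
    (hx : ∀ m, 0 < x m) (i : Fin n) :
    pderiv' (pderiv' f i) i x = deriv (deriv F) (∑ m, g m (x m)) * g' i (x i) ^ 2
      + deriv F (∑ m, g m (x m)) * g'' i (x i) := by
  have h := ((hF' _).hasDerivAt.comp (x i)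
    (hasDerivAt_sum_apply_update (hg i _ (hx i)))).mul (hg' i _ (hx i))
  refine (pderiv'_eq_of_hasDerivAt ?_ h).trans ?_
  · filter_upwards [eventually_update_pos_s19 hx i] with t ht
    rw [pderiv'_comp_sum hF hg hf ht, update_self, Pi.mul_apply, comp_apply]
  · rw [comp_apply, update_eq_self]
    ring

theorem hicksDenom_comp_sum (hF : Differentiable ℝ F)
    (hF' : Differentiable ℝ (deriv F)) (hg : ∀ m, ∀ t, 0 < t → HasDerivAt (g m) (g' m t) t)
    (hg' : ∀ m, ∀ t, 0 < t → HasDerivAt (g' m) (g'' m t) t)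
    (hf : ∀ x : Fin n → ℝ, (∀ m, 0 < x m) → f x = F (∑ m, g m (x m)))
    (hx : ∀ m, 0 < x m) (hij : i ≠ j) (hF0 : deriv F (∑ m, g m (x m)) ≠ 0)
    (hgi : g' i (x i) ≠ 0) (hgj : g' j (x j) ≠ 0) :
    hicksDenom f i j x = (g'' i (x i) / g' i (x i) ^ 2 + g'' j (x j) / g' j (x j) ^ 2)
      / deriv F (∑ m, g m (x m)) := by
  rw [hicksDenom, pderiv'_pderiv'_comp_sum_self hF hF' hg hg' hf hx,
    pderiv'_pderiv'_comp_sum_self hF hF' hg hg' hf hx,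
    pderiv'_pderiv'_comp_sum_of_ne hF hF' hg hf hx hij,
    pderiv'_comp_sum hF hg hf hx, pderiv'_comp_sum hF hg hf hx]
  field_simp
  ring

theorem hicks_comp_sum (hF : Differentiable ℝ F)
    (hF' : Differentiable ℝ (deriv F)) (hg : ∀ m, ∀ t, 0 < t → HasDerivAt (g m) (g' m t) t)
    (hg' : ∀ m, ∀ t, 0 < t → HasDerivAt (g' m) (g'' m t) t)
    (hf : ∀ x : Fin n → ℝ, (∀ m, 0 < x m) → f x = F (∑ m, g m (x m)))
    (hx : ∀ m, 0 < x m) (hij : i ≠ j) (hF0 : deriv F (∑ m, g m (x m)) ≠ 0)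
    (hgi : g' i (x i) ≠ 0) (hgj : g' j (x j) ≠ 0) :
    hicks f i j x = -(1 / (x i * g' i (x i)) + 1 / (x j * g' j (x j)))
      / (g'' i (x i) / g' i (x i) ^ 2 + g'' j (x j) / g' j (x j) ^ 2) := by
  rw [hicks, hicksDenom_comp_sum hF hF' hg hg' hf hx hij hF0 hgi hgj,
    pderiv'_comp_sum hF hg hf hx, pderiv'_comp_sum hF hg hf hx]
  have hxi := (hx i).ne'
  have hxj := (hx j).ne'
  refine Eq.trans ?_ (div_div_div_cancel_right₀ hF0 _ _)
  congr 1
  field_simp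

theorem hicks_comp_sum_of_mul_deriv_eq (hF : Differentiable ℝ F)
    (hF' : Differentiable ℝ (deriv F)) (hg : ∀ m, ∀ t, 0 < t → HasDerivAt (g m) (g' m t) t)
    (hg' : ∀ m, ∀ t, 0 < t → HasDerivAt (g' m) (g'' m t) t)
    (hf : ∀ x : Fin n → ℝ, (∀ m, 0 < x m) → f x = F (∑ m, g m (x m)))
    (hx : ∀ m, 0 < x m) (hij : i ≠ j) (hF0 : deriv F (∑ m, g m (x m)) ≠ 0)
    (hg0 : ∀ m, ∀ t, 0 < t → g' m t ≠ 0) {e : ℝ} (he : ∀ m, ∀ t, 0 < t → t * g'' m t = e * g' m t)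
    (hden : hicksDenom f i j x ≠ 0) :
    hicks f i j x = -1 / e := by
  have hgi := hg0 i _ (hx i)
  have hgj := hg0 j _ (hx j)
  have hxi := (hx i).ne'
  have hxj := (hx j).ne'
  have hD : g'' i (x i) / g' i (x i) ^ 2 + g'' j (x j) / g' j (x j) ^ 2
      = e * (1 / (x i * g' i (x i)) + 1 / (x j * g' j (x j))) := by
    rw [eq_div_of_mul_eq hxi ((mul_comm _ _).trans (he i _ (hx i))),
      eq_div_of_mul_eq hxj ((mul_comm _ _).trans (he j _ (hx j)))]
    field_simp
  rw [hicksDenom_comp_sum hF hF' hg hg' hf hx hij hF0 hgi hgj, hD] at hden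
  have hA0 := right_ne_zero_of_mul (div_ne_zero_iff.mp hden).1
  rw [hicks_comp_sum hF hF' hg hg' hf hx hij hF0 hgi hgj, hD, mul_comm e, ← div_div, neg_div,
    div_self hA0]

end CompSum

theorem hasDerivAt_const_mul_rpow {c p t : ℝ} (ht : 0 < t) :
    HasDerivAt (fun s => c * s ^ p) (c * p * t ^ (p - 1)) t := by
  simpa only [mul_assoc] using (hasDerivAt_rpow_const (p := p) (Or.inl ht.ne')).const_mul c

theorem stmt_19_general (n : ℕ) (σ : ℝ) (hσ0 : σ ≠ 0) (hσ1 : σ ≠ 1)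
    (F : ℝ → ℝ)
    (hF1 : Differentiable ℝ F) (hF2 : Differentiable ℝ (deriv F))
    (hF' : ∀ u, deriv F u ≠ 0)
    (β : Fin n → ℝ) (hβ : ∀ i, β i ≠ 0)
    (f : (Fin n → ℝ) → ℝ)
    (hf : ∀ x : Fin n → ℝ, (∀ i, 0 < x i) →
      f x = F (∑ i, β i * (x i) ^ ((σ - 1) / σ))) :
    ∀ x : Fin n → ℝ, (∀ i, 0 < x i) → ∀ i j : Fin n, i ≠ j →
      hicksDenom f i j x ≠ 0 → hicks f i j x = σ := by
  intro x hx i j hij hden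
  set ρ := (σ - 1) / σ with hρ
  have hρ0 : ρ ≠ 0 := div_ne_zero (sub_ne_zero.mpr hσ1) hσ0
  have euler (m : Fin n) (t : ℝ) (ht : 0 < t) :
      t * (β m * ρ * (ρ - 1) * t ^ (ρ - 1 - 1)) = (ρ - 1) * (β m * ρ * t ^ (ρ - 1)) := by
    rw [rpow_sub_one ht.ne' (ρ - 1)]
    field_simp
  rw [hicks_comp_sum_of_mul_deriv_eq hF1 hF2 (fun m t ht => hasDerivAt_const_mul_rpow ht)
    (fun m t ht => hasDerivAt_const_mul_rpow ht) hf hx hij (hF' _)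
    (fun m t ht => mul_ne_zero (mul_ne_zero (hβ m) hρ0) (rpow_pos_of_pos ht _).ne') euler hden,
    hρ]
  field_simp
  ring

/-- The homothetic generalized ACMS production function
`f = F(β₁ x₁^{(σ−1)/σ} + … + βₙ xₙ^{(σ−1)/σ})` (with `σ ≠ 0, 1` and nonzero
`βᵢ`) has constant Hicks elasticity of substitution equal to `σ` wherever
the denominator in `H_{ij}` is nonzero. -/
theorem stmt_19 (n : ℕ) (hn : 2 ≤ n) (σ : ℝ) (hσ0 : σ ≠ 0) (hσ1 : σ ≠ 1)
    (F : ℝ → ℝ)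
    (hFpos : ∀ u, 0 < F u)
    (hF1 : Differentiable ℝ F) (hF2 : Differentiable ℝ (deriv F))
    (hF' : ∀ u, deriv F u ≠ 0)
    (β : Fin n → ℝ) (hβ : ∀ i, β i ≠ 0)
    (f : (Fin n → ℝ) → ℝ)
    (hf : ∀ x : Fin n → ℝ, (∀ i, 0 < x i) →
      f x = F (∑ i, β i * (x i) ^ ((σ - 1) / σ))) :
    ∀ x : Fin n → ℝ, (∀ i, 0 < x i) → ∀ i j : Fin n, i ≠ j →
      hicksDenom f i j x ≠ 0 → hicks f i j x = σ :=
  stmt_19_general n σ hσ0 hσ1 F hF1 hF2 hF' β hβ f hf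
end
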